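/- arXiv:1511.02111 — 6 statements merged into one kernel-verified Lean document; each statement's English description precedes it below -/
import Mathlib

section
/- For all nonnegative integers i, j, m, setting n = i + j + 2m, the number of square-lattice walks of length n that start at (0,0), end at (i,j), and are confined to the quadrant Q equals (i+1)·(j+1)·n!·(n+2)! / ( m!·(m+i+j+2)!·(m+i+1)!·(m+j+1)! ). -/
/-!
Both sides satisfy the recurrence obtained by removing the last step of a walk: the count at
`(x, y)` after `n + 1` steps is the sum of the counts at the four neighbours after `n` steps.
Writing the closed form with `1 / k!` extended by `0` to negative `k` (as `1 / Γ(k + 1)` is)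
makes it vanish exactly where the neighbour lies outside the quadrant or too far from the
origin, so the recurrence for the closed form is a single polynomial identity with no
boundary cases, and induction on `n` finishes the proof.
-/

/-- Square-lattice steps. -/
def squareSteps : Set (ℤ × ℤ) := {(1,0), (-1,0), (0,1), (0,-1)}

/-- Diagonal-lattice steps. -/
def diagSteps : Set (ℤ × ℤ) := {(1,1), (1,-1), (-1,1), (-1,-1)}

/-- The three-quadrant cone `C = {(i,j) : i ≥ 0 or j ≥ 0}`. -/
def coneC : Set (ℤ × ℤ) := {p | 0 ≤ p.1 ∨ 0 ≤ p.2}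

/-- The quadrant `Q = {(i,j) : i ≥ 0 and j ≥ 0}`. -/
def quadQ : Set (ℤ × ℤ) := {p | 0 ≤ p.1 ∧ 0 ≤ p.2}

/-- Number of walks of length `n` with steps in `steps`, from `a` to `b`,
confined to `region`. -/
noncomputable def walkCount (steps region : Set (ℤ × ℤ)) (a b : ℤ × ℤ) (n : ℕ) : ℕ :=
  Nat.card {w : Fin (n+1) → ℤ × ℤ //
    w 0 = a ∧ w (Fin.last n) = b ∧
    (∀ k : Fin n, w k.succ - w k.castSucc ∈ steps) ∧
    (∀ k, w k ∈ region)}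

def IsConfinedWalk (steps region : Set (ℤ × ℤ)) (a b : ℤ × ℤ) (n : ℕ)
    (w : Fin (n + 1) → ℤ × ℤ) : Prop :=
  w 0 = a ∧ w (Fin.last n) = b ∧
    (∀ k : Fin n, w k.succ - w k.castSucc ∈ steps) ∧ (∀ k, w k ∈ region)

namespace IsConfinedWalk

variable {steps region : Set (ℤ × ℤ)} {a b : ℤ × ℤ} {n : ℕ}

theorem walkCount_eq_card :
    walkCount steps region a b n = Nat.card {w // IsConfinedWalk steps region a b n w} := rfl

theorem eq_of_start_eq_of_steps_eq {w w' : Fin (n + 1) → ℤ × ℤ} (h0 : w 0 = w' 0)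
    (h : ∀ k : Fin n, w k.succ - w k.castSucc = w' k.succ - w' k.castSucc) : w = w' := by
  funext k
  induction k using Fin.induction with
  | zero => exact h0
  | succ k ih => simpa [ih] using h k

theorem finite (hsteps : steps.Finite) :
    Finite {w // IsConfinedWalk steps region a b n w} := by
  have := hsteps.to_subtype
  refine Finite.of_injective
    (fun w (k : Fin n) => (⟨w.1 k.succ - w.1 k.castSucc, w.2.2.2.1 k⟩ : steps)) ?_
  intro w w' h
  exact Subtype.ext <| eq_of_start_eq_of_steps_eq (w.2.1.trans w'.2.1.symm)
    fun k => congrArg Subtype.val (congrFun h k)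

theorem init {w : Fin (n + 2) → ℤ × ℤ} (hw : IsConfinedWalk steps region a b (n + 1) w) :
    IsConfinedWalk steps region a (w (Fin.last n).castSucc) n (Fin.init w) :=
  ⟨hw.1, rfl, fun k => by simpa only [Fin.init, Fin.succ_castSucc] using hw.2.2.1 k.castSucc,
    fun k => hw.2.2.2 _⟩

theorem last_step_mem {w : Fin (n + 2) → ℤ × ℤ}
    (hw : IsConfinedWalk steps region a b (n + 1) w) : b - w (Fin.last n).castSucc ∈ steps := by
  simpa only [Fin.succ_last, hw.2.1] using hw.2.2.1 (Fin.last n)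

theorem snoc {c : ℤ × ℤ} {w : Fin (n + 1) → ℤ × ℤ} (hw : IsConfinedWalk steps region a c n w)
    (hs : b - c ∈ steps) (hb : b ∈ region) :
    IsConfinedWalk steps region a b (n + 1) (Fin.snoc w b) := by
  refine ⟨(Fin.snoc_castSucc (α := fun _ => ℤ × ℤ) b w 0).trans hw.1, Fin.snoc_last _ _,
    fun k => ?_, fun k => ?_⟩
  · induction k using Fin.lastCases with
    | last => rwa [Fin.succ_last, Fin.snoc_last, Fin.snoc_castSucc, hw.2.1]
    | cast k =>
      rw [Fin.succ_castSucc, Fin.snoc_castSucc, Fin.snoc_castSucc]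
      exact hw.2.2.1 k
  · induction k using Fin.lastCases with
    | last => rwa [Fin.snoc_last]
    | cast k => rw [Fin.snoc_castSucc]; exact hw.2.2.2 k

def snocEquiv (hb : b ∈ region) :
    {w // IsConfinedWalk steps region a b (n + 1) w} ≃
      Σ s : steps, {w // IsConfinedWalk steps region a (b - s) n w} where
  toFun w := ⟨⟨_, w.2.last_step_mem⟩, ⟨Fin.init w.1, by simp [w.2.init]⟩⟩
  invFun p := ⟨Fin.snoc p.2.1 b, p.2.2.snoc (by rw [sub_sub_cancel]; exact p.1.2) hb⟩
  left_inv w := Subtype.ext <| by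
    conv_rhs => rw [← Fin.snoc_init_self w.1]
    rw [w.2.2.1]
  right_inv p := Sigma.subtype_ext (Subtype.ext (by simp [p.2.2.2.1]))
    (Fin.init_snoc (α := fun _ => ℤ × ℤ) b p.2.1)

end IsConfinedWalk

open IsConfinedWalk

section walkCount

variable {steps region : Set (ℤ × ℤ)} {a b : ℤ × ℤ}

theorem walkCount_zero_self (ha : a ∈ region) : walkCount steps region a a 0 = 1 := by
  rw [walkCount_eq_card, Nat.card_eq_one_iff_exists]
  refine ⟨⟨fun _ => a, rfl, rfl, Fin.elim0, fun _ => ha⟩, fun w => Subtype.ext ?_⟩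
  funext k
  rw [Fin.fin_one_eq_zero k, w.2.1]

theorem walkCount_eq_zero_of_notMem (hb : b ∉ region) (n : ℕ) :
    walkCount steps region a b n = 0 := by
  rw [walkCount_eq_card, Nat.card_eq_zero]
  exact Or.inl ⟨fun w => hb (w.2.2.1 ▸ w.2.2.2.2 (Fin.last n))⟩

theorem walkCount_succ {S : Finset (ℤ × ℤ)} (hb : b ∈ region) (n : ℕ) :
    walkCount S region a b (n + 1) = ∑ s ∈ S, walkCount S region a (b - s) n := by
  have (c : ℤ × ℤ) : Finite {w // IsConfinedWalk S region a c n w} := finite S.finite_toSet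
  rw [walkCount_eq_card, Nat.card_congr (snocEquiv hb), Nat.card_sigma]
  exact Finset.sum_coe_sort S fun s => walkCount S region a (b - s) n

end walkCount

section squareSteps

variable {region : Set (ℤ × ℤ)} {a b : ℤ × ℤ} {n : ℕ}

theorem squareSteps_eq_coe :
    squareSteps = ↑({(1, 0), (-1, 0), (0, 1), (0, -1)} : Finset (ℤ × ℤ)) := by
  simp [squareSteps]

theorem walkCount_squareSteps_succ {x y : ℤ} (hb : (x, y) ∈ region) (n : ℕ) :
    walkCount squareSteps region a (x, y) (n + 1) =
      walkCount squareSteps region a (x - 1, y) n + walkCount squareSteps region a (x + 1, y) n +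
        walkCount squareSteps region a (x, y - 1) n +
        walkCount squareSteps region a (x, y + 1) n := by
  rw [squareSteps_eq_coe, walkCount_succ hb, Finset.sum_insert (by decide),
    Finset.sum_insert (by decide), Finset.sum_insert (by decide), Finset.sum_singleton]
  simp only [Prod.mk_sub_mk, sub_zero, sub_neg_eq_add, add_assoc]

theorem IsConfinedWalk.natAbs_sub_add_natAbs_sub_le {w : Fin (n + 1) → ℤ × ℤ}
    (hw : IsConfinedWalk squareSteps region a b n w) (k : Fin (n + 1)) :
    ((w k).1 - a.1).natAbs + ((w k).2 - a.2).natAbs ≤ k := by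
  induction k using Fin.induction with
  | zero => simp [hw.1]
  | succ k ih =>
    have hk := hw.2.2.1 k
    simp only [squareSteps, Set.mem_insert_iff, Set.mem_singleton_iff, Prod.ext_iff,
      Prod.fst_sub, Prod.snd_sub] at hk
    simp only [Fin.val_succ, Fin.val_castSucc] at ih ⊢
    omega

theorem walkCount_squareSteps_eq_zero_of_lt
    (h : n < (b.1 - a.1).natAbs + (b.2 - a.2).natAbs) :
    walkCount squareSteps region a b n = 0 := by
  rw [walkCount_eq_card, Nat.card_eq_zero]
  refine Or.inl ⟨fun w => ?_⟩
  have := w.2.natAbs_sub_add_natAbs_sub_le (Fin.last n)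
  rw [w.2.2.1, Fin.val_last] at this
  omega

end squareSteps

def invFactorial : ℤ → ℚ
  | (k : ℕ) => (k.factorial : ℚ)⁻¹
  | Int.negSucc _ => 0

theorem invFactorial_natCast (k : ℕ) : invFactorial k = (k.factorial : ℚ)⁻¹ := rfl

theorem invFactorial_of_neg {k : ℤ} (hk : k < 0) : invFactorial k = 0 := by
  obtain ⟨k, rfl⟩ := Int.exists_eq_neg_ofNat hk.le
  obtain ⟨k, rfl⟩ := Nat.exists_eq_add_one.mpr (by omega : 0 < k)
  rfl

theorem invFactorial_sub_one (k : ℤ) : invFactorial (k - 1) = k * invFactorial k := by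
  rcases lt_or_ge 0 k with hk | hk
  · obtain ⟨k, rfl⟩ : ∃ j : ℕ, k = j + 1 := ⟨(k - 1).toNat, by omega⟩
    rw [add_sub_cancel_right, show (k : ℤ) + 1 = (k + 1 : ℕ) by push_cast; rfl,
      invFactorial_natCast, invFactorial_natCast, Nat.factorial_succ]
    push_cast
    field_simp
  · rw [invFactorial_of_neg (by omega)]
    rcases hk.lt_or_eq with hk | rfl
    · rw [invFactorial_of_neg hk, mul_zero]
    · rw [Int.cast_zero, zero_mul]

/-- The closed form at length `n` and endpoint `(x, y)`, where `x + y + 2 * m = n`. -/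
def quadrantFormula (n : ℕ) (x y m : ℤ) : ℚ :=
  (x + 1) * (y + 1) * n.factorial * (n + 2).factorial * invFactorial m *
    invFactorial (m + x + y + 2) * invFactorial (m + x + 1) * invFactorial (m + y + 1)

theorem quadrantFormula_succ {n : ℕ} {x y m : ℤ} (h : x + y + 2 * m = n + 1) :
    quadrantFormula (n + 1) x y m =
      quadrantFormula n (x - 1) y m + quadrantFormula n (x + 1) y (m - 1) +
        quadrantFormula n x (y - 1) m + quadrantFormula n x (y + 1) (m - 1) := by
  have hn : (n : ℚ) = x + y + 2 * m - 1 := by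
    rw [eq_sub_iff_add_eq]; exact_mod_cast h.symm
  unfold quadrantFormula
  rw [show m + (x - 1) + y + 2 = m + x + y + 2 - 1 by ring,
    show m + (x - 1) + 1 = m + x + 1 - 1 by ring,
    show m - 1 + (x + 1) + y + 2 = m + x + y + 2 by ring,
    show m - 1 + (x + 1) + 1 = m + x + 1 by ring,
    show m - 1 + y + 1 = m + y + 1 - 1 by ring,
    show m + x + (y - 1) + 2 = m + x + y + 2 - 1 by ring,
    show m + (y - 1) + 1 = m + y + 1 - 1 by ring,
    show m - 1 + x + (y + 1) + 2 = m + x + y + 2 by ring,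
    show m - 1 + x + 1 = m + x + 1 - 1 by ring,
    show m - 1 + (y + 1) + 1 = m + y + 1 by ring,
    show n + 1 + 2 = n + 2 + 1 by rfl]
  simp only [invFactorial_sub_one, Nat.factorial_succ]
  push_cast
  rw [hn]
  ring

theorem quadrantFormula_eq_zero {n : ℕ} {x y m : ℤ} (h : x = -1 ∨ y = -1 ∨ m < 0) :
    quadrantFormula n x y m = 0 := by
  unfold quadrantFormula
  rcases h with rfl | rfl | hm
  · simp
  · simp
  · simp [invFactorial_of_neg hm]

theorem quadrantFormula_natCast (i j m : ℕ) :
    quadrantFormula (i + j + 2 * m) i j m =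
      ((i + 1) * (j + 1) * Nat.factorial (i + j + 2*m) *
          Nat.factorial (i + j + 2*m + 2) : ℚ) /
        (Nat.factorial m * Nat.factorial (m + i + j + 2) *
          Nat.factorial (m + i + 1) * Nat.factorial (m + j + 1)) := by
  have h₁ : (m : ℤ) + i + j + 2 = (m + i + j + 2 : ℕ) := by push_cast; rfl
  have h₂ : (m : ℤ) + i + 1 = (m + i + 1 : ℕ) := by push_cast; rfl
  have h₃ : (m : ℤ) + j + 1 = (m + j + 1 : ℕ) := by push_cast; rfl
  rw [quadrantFormula, h₁, h₂, h₃]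
  simp only [invFactorial_natCast, Int.cast_natCast, div_eq_mul_inv, mul_inv]
  ring

theorem walkCount_squareSteps_quadQ_eq_zero {n : ℕ} {x y m : ℤ}
    (hn : x + y + 2 * m = n) (h : x = -1 ∨ y = -1 ∨ m < 0) :
    walkCount squareSteps quadQ (0, 0) (x, y) n = 0 := by
  by_cases hQ : (x, y) ∈ quadQ
  · obtain ⟨hx₀, hy₀⟩ := hQ
    apply walkCount_squareSteps_eq_zero_of_lt
    simp only [sub_zero]
    omega
  · exact walkCount_eq_zero_of_notMem hQ n

theorem walkCount_squareSteps_quadQ (n : ℕ) (x y m : ℤ) (hx : -1 ≤ x) (hy : -1 ≤ y)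
    (hn : x + y + 2 * m = n) :
    (walkCount squareSteps quadQ (0, 0) (x, y) n : ℚ) = quadrantFormula n x y m := by
  induction n generalizing x y m with
  | zero =>
    by_cases h : x = -1 ∨ y = -1 ∨ m < 0
    · rw [walkCount_squareSteps_quadQ_eq_zero hn h, quadrantFormula_eq_zero h, Nat.cast_zero]
    · obtain ⟨rfl, rfl, rfl⟩ : x = 0 ∧ y = 0 ∧ m = 0 := by omega
      rw [walkCount_zero_self (show ((0 : ℤ), (0 : ℤ)) ∈ quadQ from ⟨le_rfl, le_rfl⟩)]
      simpa using (quadrantFormula_natCast 0 0 0).symm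
  | succ n ih =>
    by_cases h : x = -1 ∨ y = -1 ∨ m < 0
    · rw [walkCount_squareSteps_quadQ_eq_zero hn h, quadrantFormula_eq_zero h, Nat.cast_zero]
    · rw [walkCount_squareSteps_succ (show (x, y) ∈ quadQ from ⟨by omega, by omega⟩),
        quadrantFormula_succ (by omega)]
      push_cast
      rw [ih (x - 1) y m (by omega) hy (by omega), ih (x + 1) y (m - 1) (by omega) hy (by omega),
        ih x (y - 1) m hx (by omega) (by omega), ih x (y + 1) (m - 1) hx (by omega) (by omega)]

theorem square_quadrant_count (i j m : ℕ) :
    (walkCount squareSteps quadQ (0, 0) ((i : ℤ), (j : ℤ)) (i + j + 2*m) : ℚ) =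
      ((i + 1) * (j + 1) * Nat.factorial (i + j + 2*m) *
          Nat.factorial (i + j + 2*m + 2) : ℚ) /
        (Nat.factorial m * Nat.factorial (m + i + j + 2) *
          Nat.factorial (m + i + 1) * Nat.factorial (m + j + 1)) := by
  rw [walkCount_squareSteps_quadQ _ i j m (by omega) (by omega) (by push_cast; ring),
    quadrantFormula_natCast]
end

section
/- For all nonnegative integers i, j, n such that i, j and n all have the same parity, the number of diagonal-lattice walks of length n that start at (0,0), end at (i,j), and are confined to the quadrant Q equals (i+1)·(j+1) / ( (1 + (n+i)/2)·(1 + (n+j)/2) ) · binom(n, (n+i)/2) · binom(n, (n+j)/2), where binom(n,k) = 0 when k > n. -/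
/-!
Projecting a diagonal step onto the two axes gives two independent `±1` steps, and the quadrant
condition is nonnegativity of each coordinate, so quadrant walks are exactly pairs of
nonnegative `±1` paths (ballot paths) and their number is a product of two ballot numbers.
With `n + i = 2m`, the number of ballot paths of length `n` ending at height `i` is
`C(n, m) - C(n, m + 1) = (i + 1) / (m + 1) · C(n, m)`: both sides satisfy the last-step recursion,
and the boundary condition at height `-1` holds for the right side by the symmetry of binomial
coefficients (the reflection principle).
-/

def walks {G : Type*} [Sub G] (steps region : Set G) (a b : G) (n : ℕ) :
    Set (Fin (n + 1) → G) :=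
  {w | w 0 = a ∧ w (Fin.last n) = b ∧ (∀ k : Fin n, w k.succ - w k.castSucc ∈ steps) ∧
    ∀ k, w k ∈ region}

namespace walks

section Sub

variable {G H : Type*} [Sub G] [Sub H] {S R : Set G} {a b c : G} {n : ℕ}

theorem eq_empty_of_notMem (hb : b ∉ R) : walks S R a b n = ∅ :=
  Set.eq_empty_of_forall_notMem fun _ ⟨_, hw, _, hR⟩ => hb (hw ▸ hR _)

theorem zero_subset : walks S R a b 0 ⊆ {fun _ => a} := fun w hw =>
  funext fun k => (congrArg w (Fin.fin_one_eq_zero k)).trans hw.1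

theorem zero_eq_empty (hab : a ≠ b) : walks S R a b 0 = ∅ :=
  Set.eq_empty_of_forall_notMem fun _ ⟨h0, hl, _⟩ => hab (h0.symm.trans hl)

theorem zero_self (ha : a ∈ R) : walks S R a a 0 = {fun _ => a} :=
  Set.Subset.antisymm zero_subset <| Set.singleton_subset_iff.2
    ⟨rfl, rfl, fun k => k.elim0, fun _ => ha⟩

theorem init_mem {w : Fin (n + 2) → G} (hw : w ∈ walks S R a b (n + 1)) :
    Fin.init w ∈ walks S R a (w (Fin.last n).castSucc) n := by
  obtain ⟨h0, -, hS, hR⟩ := hw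
  refine ⟨h0, rfl, fun k => ?_, fun k => hR _⟩
  simpa only [Fin.init, Fin.succ_castSucc] using hS k.castSucc

theorem snoc_mem {v : Fin (n + 1) → G} (hv : v ∈ walks S R a c n) (hS : b - c ∈ S)
    (hb : b ∈ R) : (Fin.snoc v b : Fin (n + 2) → G) ∈ walks S R a b (n + 1) := by
  obtain ⟨h0, hl, hvS, hvR⟩ := hv
  refine ⟨?_, Fin.snoc_last _ _, fun k => ?_, fun k => ?_⟩
  · rw [← Fin.castSucc_zero, Fin.snoc_castSucc, h0]
  · induction k using Fin.lastCases with
    | last => rwa [Fin.succ_last, Fin.snoc_last, Fin.snoc_castSucc, hl]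
    | cast k => rw [Fin.succ_castSucc, Fin.snoc_castSucc, Fin.snoc_castSucc]; exact hvS k
  · induction k using Fin.lastCases with
    | last => simpa using hb
    | cast k => simpa using hvR k

def prodEquiv {T R' : Set H} {a' b' : H} :
    walks (S ×ˢ T) (R ×ˢ R') (a, a') (b, b') n ≃ walks S R a b n × walks T R' a' b' n :=
  (Equiv.subtypeEquiv (Equiv.arrowProdEquivProdArrow _ _ _) fun w => by
    simp only [walks, Set.mem_ofPred_eq, Set.mem_prod, Prod.ext_iff, Prod.fst_sub, Prod.snd_sub,
      forall_and, Equiv.arrowProdEquivProdArrow]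
    tauto).trans
  (Equiv.subtypeProdEquivProd (p := (· ∈ walks S R a b n)) (q := (· ∈ walks T R' a' b' n)))

end Sub

section AddCommGroup

variable {G : Type*} [AddCommGroup G] {S R : Set G} {a b : G} {n : ℕ}

theorem succ_eq_image (hb : b ∈ R) :
    walks S R a b (n + 1) = (Fin.snoc · b) '' ⋃ s ∈ S, walks S R a (b - s) n := by
  ext w
  simp only [Set.mem_image, Set.mem_iUnion, exists_prop]
  constructor
  · intro hw
    have hlast : w (Fin.last (n + 1)) = b := hw.2.1
    refine ⟨Fin.init w, ⟨b - w (Fin.last n).castSucc, ?_, ?_⟩, ?_⟩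
    · simpa [hlast] using hw.2.2.1 (Fin.last n)
    · simpa using init_mem hw
    · rw [← hlast, Fin.snoc_init_self]
  · rintro ⟨v, ⟨s, hs, hv⟩, rfl⟩
    exact snoc_mem hv (by simpa using hs) hb

theorem finite (hS : S.Finite) : (walks S R a b n).Finite := by
  induction n generalizing b with
  | zero => exact (Set.finite_singleton _).subset zero_subset
  | succ n ih =>
    by_cases hb : b ∈ R
    · rw [succ_eq_image hb]
      exact (hS.biUnion fun _ _ => ih).image _
    · simp [eq_empty_of_notMem hb]

theorem ncard_succ_of_pair {s t : G} (hst : s ≠ t) (hb : b ∈ R) :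
    (walks {s, t} R a b (n + 1)).ncard =
      (walks {s, t} R a (b - s) n).ncard + (walks {s, t} R a (b - t) n).ncard := by
  have hfin : ({s, t} : Set G).Finite := by simp
  have hdisj : Disjoint (walks {s, t} R a (b - s) n) (walks {s, t} R a (b - t) n) :=
    Set.disjoint_left.2 fun _ hs ht => hst (sub_right_injective (hs.2.1.symm.trans ht.2.1))
  have hsnoc : Function.Injective (Fin.snoc · b : (Fin (n + 1) → G) → Fin (n + 2) → G) :=
    fun v w h => by simpa using congrArg Fin.init h
  rw [succ_eq_image hb, Set.biUnion_pair, Set.ncard_image_of_injective _ hsnoc,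
    Set.ncard_union_eq hdisj (finite hfin) (finite hfin)]

end AddCommGroup

end walks

noncomputable def ballotCount (n : ℕ) (b : ℤ) : ℕ :=
  (walks {1, -1} (Set.Ici 0) 0 b n).ncard

theorem ballotCount_zero (b : ℤ) : ballotCount 0 b = if b = 0 then 1 else 0 := by
  split_ifs with hb
  · simp [ballotCount, hb, walks.zero_self]
  · simp [ballotCount, walks.zero_eq_empty (Ne.symm hb)]

theorem ballotCount_of_neg (n : ℕ) {b : ℤ} (hb : b < 0) : ballotCount n b = 0 := by
  simp [ballotCount, walks.eq_empty_of_notMem (show b ∉ Set.Ici 0 from not_le.2 hb)]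

theorem ballotCount_succ (n : ℕ) {b : ℤ} (hb : 0 ≤ b) :
    ballotCount (n + 1) b = ballotCount n (b - 1) + ballotCount n (b + 1) := by
  rw [ballotCount, walks.ncard_succ_of_pair (by decide) (Set.mem_Ici.2 hb), sub_neg_eq_add]
  rfl

theorem ballotCount_eq_choose_sub_choose (n m : ℕ) (h : n ≤ 2 * m) :
    (ballotCount n (2 * m - n) : ℤ) = n.choose m - n.choose (m + 1) := by
  induction n generalizing m with
  | zero =>
    rcases m with _ | m
    · simp [ballotCount_zero]
    · rw [ballotCount_zero, if_neg (by omega)]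
      simp
  | succ n ih =>
    obtain ⟨k, rfl⟩ : ∃ k, m = k + 1 := ⟨m - 1, by omega⟩
    have hup : (ballotCount n (2 * k - n) : ℤ) = n.choose k - n.choose (k + 1) := by
      rcases le_or_gt n (2 * k) with hn | hn
      · exact ih k hn
      · -- the closed form vanishes at height `-1`: this is the reflection principle
        obtain rfl : n = 2 * k + 1 := by omega
        rw [ballotCount_of_neg _ (by omega), Nat.choose_symm_half]
        simp
    rw [ballotCount_succ _ (by omega), Nat.cast_add, Nat.choose_succ_succ', Nat.choose_succ_succ']
    push_cast
    rw [show (2 * (k + 1 : ℤ) - (n + 1) - 1) = 2 * k - n by ring, hup,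
      show (2 * (k + 1 : ℤ) - (n + 1) + 1) = 2 * (k + 1 : ℕ) - n by push_cast; ring,
      ih (k + 1) (by omega)]
    ring

theorem Nat.cast_choose_sub_choose_succ {K : Type*} [Field K] [CharZero K] {n m i : ℕ}
    (h : n + i = 2 * m) :
    (n.choose m : K) - n.choose (m + 1) = (i + 1) / (m + 1) * n.choose m := by
  rcases le_or_gt m n with hmn | hmn
  · have hrec : (n.choose (m + 1) : K) * (m + 1) = n.choose m * (n - m) := by
      have := congrArg (Nat.cast (R := K)) (Nat.choose_succ_right_eq n m)
      push_cast [Nat.cast_sub hmn] at this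
      exact this
    have hsum : (n + i : K) = 2 * m := by exact_mod_cast h
    field_simp
    linear_combination -hrec - (n.choose m : K) * hsum
  · simp [Nat.choose_eq_zero_of_lt hmn, Nat.choose_eq_zero_of_lt (hmn.trans (Nat.lt_succ_self m))]

theorem ballotCount_eq_div_mul_choose (n i : ℕ) (h : i % 2 = n % 2) :
    (ballotCount n i : ℚ) = (i + 1) / ((1 + (n + i) / 2 : ℕ) : ℚ) * n.choose ((n + i) / 2) := by
  have hm : n + i = 2 * ((n + i) / 2) := by omega
  have hcount := ballotCount_eq_choose_sub_choose n ((n + i) / 2) (by omega)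
  rw [show (2 * ((n + i) / 2 : ℕ) - n : ℤ) = i by omega] at hcount
  rw [← Int.cast_natCast, hcount]
  push_cast
  rw [Nat.cast_choose_sub_choose_succ hm, add_comm 1]

theorem diagSteps_eq_prod : diagSteps = ({1, -1} : Set ℤ) ×ˢ ({1, -1} : Set ℤ) := by
  ext ⟨x, y⟩
  simp only [diagSteps, Set.mem_insert_iff, Set.mem_singleton_iff, Prod.mk.injEq, Set.mem_prod]
  tauto

theorem quadQ_eq_prod : quadQ = Set.Ici (0 : ℤ) ×ˢ Set.Ici (0 : ℤ) := rfl

theorem walkCount_diagSteps_quadQ (n : ℕ) (i j : ℤ) :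
    walkCount diagSteps quadQ (0, 0) (i, j) n = ballotCount n i * ballotCount n j := by
  change Nat.card (walks _ _ _ _ n) = _
  rw [diagSteps_eq_prod, quadQ_eq_prod, Nat.card_congr walks.prodEquiv, Nat.card_prod]
  rfl

theorem diag_quadrant_count (i j n : ℕ) (hi : i % 2 = n % 2) (hj : j % 2 = n % 2) :
    (walkCount diagSteps quadQ (0, 0) ((i : ℤ), (j : ℤ)) n : ℚ) =
      ((i + 1) * (j + 1) : ℚ) /
          (((1 + (n + i) / 2 : ℕ) : ℚ) * ((1 + (n + j) / 2 : ℕ) : ℚ)) *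
        (Nat.choose n ((n + i) / 2) : ℚ) * (Nat.choose n ((n + j) / 2) : ℚ) := by
  rw [walkCount_diagSteps_quadQ, Nat.cast_mul, ballotCount_eq_div_mul_choose n i hi,
    ballotCount_eq_div_mul_choose n j hj]
  ring
end

section
/- For all integers i ≥ 0, j ≥ 0 and all n ≥ 0, let c_{i,j}(n) denote the number of square-lattice walks of length n from (0,0) to (i,j) confined to the three-quadrant cone C, and let q_{i,j}(n) denote the number of square-lattice walks of length n from (0,0) to (i,j) confined to the quadrant Q. Then c_{i,j}(n) = q_{i,j}(n) + c_{−i−2,j}(n) + c_{i,−j−2}(n). -/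
/-!
Split the walks in `C` ending at a point of `Q` according to their last point outside `Q`.
Since the next step enters `Q`, that point lies on the line `x = -1` or on the line `y = -1`,
and not on both because `(-1, -1) ∉ C`. For the walks of the first kind, the last point
outside `Q` is also the last visit to `x = -1`; reflecting the rest of the walk in that line
(the reflection principle) gives a bijection onto the walks in `C` ending at `(-i-2, j)`.
Conversely such a walk must cross `x = -1`, and after its last visit it stays in `x ≤ -2`,
hence (being in `C`) in `y ≥ 0`, so the reflected tail lies in `Q`. Walks of the second kind
are handled by the symmetry `(x, y) ↦ (y, x)`.
-/

open Function

namespace ThreeQuadrant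

variable {α : Type*} {n : ℕ}

def walks (steps region : Set (ℤ × ℤ)) (a b : ℤ × ℤ) (n : ℕ) : Set (Fin (n + 1) → ℤ × ℤ) :=
  {w | w 0 = a ∧ w (Fin.last n) = b ∧
    (∀ k : Fin n, w k.succ - w k.castSucc ∈ steps) ∧ ∀ k, w k ∈ region}

lemma walkCount_eq_card (steps region : Set (ℤ × ℤ)) (a b : ℤ × ℤ) (n : ℕ) :
    walkCount steps region a b n = Nat.card (walks steps region a b n) := rfl

section LastVisit

noncomputable def lastVisit (s : Set α) (w : Fin (n + 1) → α) : Fin (n + 1) :=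
  sSup (w ⁻¹' s)

variable {s t : Set α} {w v : Fin (n + 1) → α} {k : Fin (n + 1)}

lemma le_lastVisit (h : w k ∈ s) : k ≤ lastVisit s w := le_sSup h

lemma notMem_of_lastVisit_lt (h : lastVisit s w < k) : w k ∉ s :=
  fun hk => (le_lastVisit hk).not_gt h

lemma lastVisit_mem (h : ∃ k, w k ∈ s) : w (lastVisit s w) ∈ s :=
  Set.Nonempty.csSup_mem h (Set.toFinite _)

lemma lastVisit_eq (hk : w k ∈ s) (hafter : ∀ m, k < m → w m ∉ s) : lastVisit s w = k :=
  le_antisymm (sSup_le fun m hm => not_lt.1 fun hlt => hafter m hlt hm) (le_lastVisit hk)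

lemma lastVisit_congr (h : ∀ k, w k ∈ s ↔ v k ∈ t) : lastVisit s w = lastVisit t v :=
  congrArg sSup (Set.ext h)

end LastVisit

section ReflectAfter

variable {f : α → α} {s : Set α} {t k : Fin (n + 1)} {w : Fin (n + 1) → α}

def reflectAfter (f : α → α) (t : Fin (n + 1)) (w : Fin (n + 1) → α) : Fin (n + 1) → α :=
  fun k => if k ≤ t then w k else f (w k)

lemma reflectAfter_of_le (h : k ≤ t) : reflectAfter f t w k = w k := if_pos h

lemma reflectAfter_of_lt (h : t < k) : reflectAfter f t w k = f (w k) := if_neg h.not_ge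

lemma involutive_reflectAfter (hf : Involutive f) (t : Fin (n + 1)) :
    Involutive (reflectAfter f t) := by
  intro w
  funext k
  by_cases h : k ≤ t <;> simp [reflectAfter, h, hf _]

lemma lastVisit_reflectAfter (hs : ∀ x, f x ∈ s ↔ x ∈ s) :
    lastVisit s (reflectAfter f t w) = lastVisit s w :=
  lastVisit_congr fun k => by by_cases h : k ≤ t <;> simp [reflectAfter, h, hs]

noncomputable def reflectAfterLastVisit (s : Set α) (f : α → α) (w : Fin (n + 1) → α) :
    Fin (n + 1) → α :=
  reflectAfter f (lastVisit s w) w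

lemma involutive_reflectAfterLastVisit (hf : Involutive f) (hs : ∀ x, f x ∈ s ↔ x ∈ s) :
    Involutive (reflectAfterLastVisit (n := n) s f) := by
  intro w
  rw [reflectAfterLastVisit, reflectAfterLastVisit, lastVisit_reflectAfter hs]
  exact involutive_reflectAfter hf _ w

end ReflectAfter

lemma eq_of_forall_succ_sub_eq [AddGroup α] {w v : Fin (n + 1) → α} (h0 : w 0 = v 0)
    (h : ∀ k : Fin n, w k.succ - w k.castSucc = v k.succ - v k.castSucc) : w = v := by
  funext k
  induction k using Fin.induction with
  | zero => exact h0
  | succ k ih => rw [← sub_add_cancel (w k.succ), h k, ih, sub_add_cancel]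

lemma exists_eq_of_abs_sub_le_one {f : Fin (n + 1) → ℤ}
    (hf : ∀ k : Fin n, |f k.succ - f k.castSucc| ≤ 1) {a b : Fin (n + 1)} (hab : a ≤ b)
    {c : ℤ} (ha : c ≤ f a) (hb : f b ≤ c) : ∃ m, a ≤ m ∧ m ≤ b ∧ f m = c := by
  induction b using Fin.induction with
  | zero =>
    obtain rfl := Fin.le_zero_iff.1 hab
    exact ⟨0, le_rfl, le_rfl, le_antisymm hb ha⟩
  | succ b ih =>
    by_cases h : a ≤ b.castSucc ∧ f b.castSucc ≤ c
    · obtain ⟨m, ham, hmb, hm⟩ := ih h.1 h.2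
      exact ⟨m, ham, hmb.trans Fin.castSucc_lt_succ.le, hm⟩
    refine ⟨b.succ, hab, le_rfl, le_antisymm hb ?_⟩
    by_cases hacs : a ≤ b.castSucc
    · have hstep := abs_le.1 (hf b)
      have hgt := not_le.1 fun h' => h ⟨hacs, h'⟩
      omega
    · have hab' : a = b.succ := le_antisymm hab (not_lt.1 (mt Fin.le_castSucc_iff.2 hacs))
      exact hab' ▸ ha

section SquareSteps

variable {p : ℤ × ℤ}

lemma abs_le_one_of_mem_squareSteps (h : p ∈ squareSteps) : |p.1| ≤ 1 ∧ |p.2| ≤ 1 := by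
  simp only [squareSteps, Set.mem_insert_iff, Set.mem_singleton_iff] at h
  rcases h with rfl | rfl | rfl | rfl <;> norm_num

lemma neg_fst_mem_squareSteps (h : p ∈ squareSteps) : (-p.1, p.2) ∈ squareSteps := by
  simp only [squareSteps, Set.mem_insert_iff, Set.mem_singleton_iff] at h
  rcases h with rfl | rfl | rfl | rfl <;> simp [squareSteps]

lemma swap_mem_squareSteps (h : p ∈ squareSteps) : p.swap ∈ squareSteps := by
  simp only [squareSteps, Set.mem_insert_iff, Set.mem_singleton_iff] at h
  rcases h with rfl | rfl | rfl | rfl <;> simp [squareSteps]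

lemma swap_mem_squareSteps_iff : p.swap ∈ squareSteps ↔ p ∈ squareSteps :=
  ⟨fun h => p.swap_swap ▸ swap_mem_squareSteps h, swap_mem_squareSteps⟩

lemma abs_sub_fst_le_one {w : Fin (n + 1) → ℤ × ℤ}
    (hw : ∀ k : Fin n, w k.succ - w k.castSucc ∈ squareSteps) (k : Fin n) :
    |(w k.succ).1 - (w k.castSucc).1| ≤ 1 := by
  simpa only [Prod.fst_sub] using (abs_le_one_of_mem_squareSteps (hw k)).1

instance : Finite squareSteps := by
  unfold squareSteps
  infer_instance

instance (region : Set (ℤ × ℤ)) (a b : ℤ × ℤ) (n : ℕ) :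
    Finite (walks squareSteps region a b n) := by
  refine Finite.of_injective (fun w k => (⟨w.1 k.succ - w.1 k.castSucc, w.2.2.2.1 k⟩ :
    squareSteps)) fun w v h => Subtype.ext ?_
  exact eq_of_forall_succ_sub_eq (w.2.1.trans v.2.1.symm)
    fun k => congrArg Subtype.val (congrFun h k)

end SquareSteps

def reflectX (p : ℤ × ℤ) : ℤ × ℤ := (-p.1 - 2, p.2)

def lineX : Set (ℤ × ℤ) := {p | p.1 = -1}

lemma mem_lineX {p : ℤ × ℤ} : p ∈ lineX ↔ p.1 = -1 := Iff.rfl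

lemma reflectX_involutive : Involutive reflectX := fun p => by simp [reflectX]

lemma reflectX_mem_lineX_iff (p : ℤ × ℤ) : reflectX p ∈ lineX ↔ p ∈ lineX := by
  simp only [reflectX, lineX, Set.mem_ofPred_eq]
  omega

lemma reflectX_sub_reflectX (p q : ℤ × ℤ) :
    reflectX p - reflectX q = (-(p - q).1, (p - q).2) := by
  ext
  · simp only [reflectX, Prod.fst_sub]
    ring
  · simp only [reflectX, Prod.snd_sub]

lemma reflectX_of_mem_lineX {p : ℤ × ℤ} (h : p ∈ lineX) : reflectX p = p := by
  simp only [lineX, Set.mem_ofPred_eq] at h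
  ext <;> simp [reflectX, h]

section Reflection

variable {a b : ℤ × ℤ} {t : Fin (n + 1)} {w : Fin (n + 1) → ℤ × ℤ}

lemma reflectAfter_sub_mem_squareSteps (ht : w t ∈ lineX)
    (hw : ∀ k : Fin n, w k.succ - w k.castSucc ∈ squareSteps) (k : Fin n) :
    reflectAfter reflectX t w k.succ - reflectAfter reflectX t w k.castSucc ∈ squareSteps := by
  rcases lt_or_ge k.castSucc t with hk | hk
  · rw [reflectAfter_of_le hk.le, reflectAfter_of_le (Fin.castSucc_lt_iff_succ_le.1 hk)]
    exact hw k
  -- `w t` lies on the mirror, so both ends of the step may be taken reflected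
  have hcs : reflectAfter reflectX t w k.castSucc = reflectX (w k.castSucc) := by
    rcases hk.eq_or_lt with rfl | hlt
    · rw [reflectAfter_of_le le_rfl, reflectX_of_mem_lineX ht]
    · exact reflectAfter_of_lt hlt
  rw [hcs, reflectAfter_of_lt (hk.trans_lt Fin.castSucc_lt_succ), reflectX_sub_reflectX]
  exact neg_fst_mem_squareSteps (hw k)

lemma reflectAfter_mem_walks (hw : w ∈ walks squareSteps coneC a b n) (ht : w t ∈ lineX)
    (htlast : t < Fin.last n) (hafter : ∀ k, t < k → reflectX (w k) ∈ coneC) :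
    reflectAfter reflectX t w ∈ walks squareSteps coneC a (reflectX b) n := by
  obtain ⟨h0, hlast, hsteps, hcone⟩ := hw
  refine ⟨(reflectAfter_of_le (Fin.zero_le t)).trans h0, ?_,
    reflectAfter_sub_mem_squareSteps ht hsteps, fun k => ?_⟩
  · rw [reflectAfter_of_lt htlast, hlast]
  rcases le_or_gt k t with hk | hk
  · rw [reflectAfter_of_le hk]
    exact hcone k
  · rw [reflectAfter_of_lt hk]
    exact hafter k hk

lemma fst_le_of_lastVisit_lineX_lt (hw : ∀ k : Fin n, w k.succ - w k.castSucc ∈ squareSteps)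
    (hlast : (w (Fin.last n)).1 ≤ -2) {k : Fin (n + 1)} (hk : lastVisit lineX w < k) :
    (w k).1 ≤ -2 := by
  by_contra! hx
  have hne : (w k).1 ≠ -1 := mem_lineX.not.1 (notMem_of_lastVisit_lt hk)
  obtain ⟨m, hkm, -, hm⟩ := exists_eq_of_abs_sub_le_one (f := fun k => (w k).1)
    (abs_sub_fst_le_one hw) (Fin.le_last k) (c := -1) (by omega) (by omega)
  exact (le_lastVisit (mem_lineX.2 hm)).not_gt (hk.trans_le hkm)

def westExits (a b : ℤ × ℤ) (n : ℕ) : Set (Fin (n + 1) → ℤ × ℤ) :=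
  {w ∈ walks squareSteps coneC a b n | (w (lastVisit quadQᶜ w)).1 = -1}

def southExits (a b : ℤ × ℤ) (n : ℕ) : Set (Fin (n + 1) → ℤ × ℤ) :=
  {w ∈ walks squareSteps coneC a b n | (w (lastVisit quadQᶜ w)).2 = -1}

instance : Finite (westExits a b n) := Finite.Set.finite_sep _ _

instance : Finite (southExits a b n) := Finite.Set.finite_sep _ _

lemma reflectAfterLastVisit_mem_walks (hb : b ∈ quadQ) (hw : w ∈ westExits a b n) :
    reflectAfterLastVisit lineX reflectX w ∈ walks squareSteps coneC a (reflectX b) n := by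
  obtain ⟨hwalk, hT⟩ := hw
  set T := lastVisit quadQᶜ w
  have hafter : ∀ k, T < k → w k ∈ quadQ := fun k hk => not_not.1 (notMem_of_lastVisit_lt hk)
  have hTx : lastVisit lineX w = T := lastVisit_eq hT fun k hk (hx : (w k).1 = -1) => by
    have := (hafter k hk).1
    omega
  have hTlast : T < Fin.last n := (Fin.le_last T).lt_of_ne fun h => by
    have := hb.1
    rw [← hwalk.2.1, ← h] at this
    omega
  rw [reflectAfterLastVisit, hTx]
  exact reflectAfter_mem_walks hwalk hT hTlast fun k hk => Or.inr (hafter k hk).2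

lemma reflectAfterLastVisit_mem_westExits (ha : a ∈ quadQ) (hb : b ∈ quadQ)
    (hw : w ∈ walks squareSteps coneC a (reflectX b) n) :
    reflectAfterLastVisit lineX reflectX w ∈ westExits a b n := by
  obtain ⟨h0, hlast, hsteps, hcone⟩ := hw
  have hxlast : (w (Fin.last n)).1 ≤ -2 := by
    rw [hlast, reflectX]
    linarith [hb.1]
  obtain ⟨t, -, -, ht⟩ := exists_eq_of_abs_sub_le_one (f := fun k => (w k).1)
    (abs_sub_fst_le_one hsteps) (Fin.zero_le (Fin.last n)) (c := -1)
    (by rw [h0]; linarith [ha.1]) (by omega)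
  set T := lastVisit lineX w
  have hT : (w T).1 = -1 := mem_lineX.1 (lastVisit_mem ⟨t, mem_lineX.2 ht⟩)
  have hafter : ∀ k, T < k → reflectX (w k) ∈ quadQ := fun k hk => by
    have hx := fst_le_of_lastVisit_lineX_lt hsteps hxlast hk
    exact ⟨by simp only [reflectX]; omega, (hcone k).resolve_left (by omega)⟩
  have hTlast : T < Fin.last n := (Fin.le_last T).lt_of_ne fun h => by
    rw [h] at hT
    omega
  have hexit : lastVisit quadQᶜ (reflectAfter reflectX T w) = T := by
    refine lastVisit_eq ?_ fun k hk => ?_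
    · rw [reflectAfter_of_le le_rfl]
      exact fun hq => by linarith [hq.1]
    · rw [reflectAfter_of_lt hk]
      exact not_not.2 (hafter k hk)
  refine ⟨reflectX_involutive b ▸ reflectAfter_mem_walks ⟨h0, hlast, hsteps, hcone⟩ hT hTlast
    fun k hk => Or.inl (hafter k hk).1, ?_⟩
  rw [reflectAfterLastVisit, hexit, reflectAfter_of_le le_rfl]
  exact hT

lemma card_westExits (ha : a ∈ quadQ) (hb : b ∈ quadQ) :
    Nat.card (westExits a b n) = walkCount squareSteps coneC a (-b.1 - 2, b.2) n := by
  have hinv := involutive_reflectAfterLastVisit (n := n) reflectX_involutive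
    reflectX_mem_lineX_iff
  refine Nat.card_congr ((hinv.toPerm _).subtypeEquiv fun w =>
    ⟨reflectAfterLastVisit_mem_walks hb, fun h => ?_⟩)
  simpa only [Involutive.coe_toPerm, hinv w] using reflectAfterLastVisit_mem_westExits ha hb h

end Reflection

section Swap

variable {a b : ℤ × ℤ} {w : Fin (n + 1) → ℤ × ℤ}

lemma swap_mem_coneC_iff (p : ℤ × ℤ) : p.swap ∈ coneC ↔ p ∈ coneC := Or.comm

lemma swap_mem_quadQ_iff (p : ℤ × ℤ) : p.swap ∈ quadQ ↔ p ∈ quadQ := And.comm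

lemma comp_swap_mem_walks_iff :
    Prod.swap ∘ w ∈ walks squareSteps coneC a.swap b.swap n ↔
      w ∈ walks squareSteps coneC a b n := by
  simp only [walks, Set.mem_ofPred_eq, comp_apply, Prod.swap_inj, ← Prod.swap_sub,
    swap_mem_squareSteps_iff, swap_mem_coneC_iff]

lemma comp_swap_mem_westExits_iff :
    Prod.swap ∘ w ∈ westExits a.swap b.swap n ↔ w ∈ southExits a b n := by
  have hT : lastVisit quadQᶜ (Prod.swap ∘ w) = lastVisit quadQᶜ w :=
    lastVisit_congr fun k => not_congr (swap_mem_quadQ_iff (w k))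
  simp only [westExits, southExits, Set.mem_ofPred_eq, comp_swap_mem_walks_iff, hT,
    comp_apply, Prod.fst_swap]

lemma card_southExits (ha : a ∈ quadQ) (hb : b ∈ quadQ) :
    Nat.card (southExits a b n) = walkCount squareSteps coneC a (b.1, -b.2 - 2) n := by
  have hswap : Involutive (fun w : Fin (n + 1) → ℤ × ℤ => Prod.swap ∘ w) :=
    fun w => funext fun k => Prod.swap_swap (w k)
  calc Nat.card (southExits a b n)
      = Nat.card (westExits a.swap b.swap n) :=
        Nat.card_congr ((hswap.toPerm _).subtypeEquiv fun _ => comp_swap_mem_westExits_iff.symm)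
    _ = walkCount squareSteps coneC a.swap (-b.2 - 2, b.1) n :=
        card_westExits ((swap_mem_quadQ_iff a).2 ha) ((swap_mem_quadQ_iff b).2 hb)
    _ = walkCount squareSteps coneC a (b.1, -b.2 - 2) n :=
        Nat.card_congr ((hswap.toPerm _).subtypeEquiv fun _ => comp_swap_mem_walks_iff.symm)

end Swap

section Decomposition

variable {a b : ℤ × ℤ} {w : Fin (n + 1) → ℤ × ℤ}

lemma fst_or_snd_eq_neg_one_at_lastVisit_compl_quadQ (hb : b ∈ quadQ) (hw : w ∈ walks squareSteps coneC a b n)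
    (hout : ∃ k, w k ∉ quadQ) :
    (w (lastVisit quadQᶜ w)).1 = -1 ∨ (w (lastVisit quadQᶜ w)).2 = -1 := by
  obtain ⟨-, hlast, hsteps, hcone⟩ := hw
  set T := lastVisit quadQᶜ w
  have hT : w T ∉ quadQ := lastVisit_mem (s := quadQᶜ) hout
  obtain ⟨k, hk⟩ : ∃ k : Fin n, k.castSucc = T :=
    Fin.exists_castSucc_eq.2 fun h => hT (h ▸ hlast ▸ hb)
  have hnext : w k.succ ∈ quadQ := not_not.1 (notMem_of_lastVisit_lt (hk ▸ Fin.castSucc_lt_succ))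
  have hstep := abs_le_one_of_mem_squareSteps (hsteps k)
  rw [hk, Prod.fst_sub, Prod.snd_sub, abs_le, abs_le] at hstep
  have hTcone := hcone T
  simp only [quadQ, coneC, Set.mem_ofPred_eq, not_and_or, not_le] at hT hnext hTcone
  omega

lemma walks_coneC_eq_union (hb : b ∈ quadQ) :
    walks squareSteps coneC a b n =
      walks squareSteps quadQ a b n ∪ westExits a b n ∪ southExits a b n := by
  refine Set.Subset.antisymm (fun w hw => ?_) ?_
  · by_cases hout : ∃ k, w k ∉ quadQ
    · rcases fst_or_snd_eq_neg_one_at_lastVisit_compl_quadQ hb hw hout with h | h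
      · exact Or.inl (Or.inr ⟨hw, h⟩)
      · exact Or.inr ⟨hw, h⟩
    · simp only [not_exists, not_not] at hout
      exact Or.inl (Or.inl ⟨hw.1, hw.2.1, hw.2.2.1, hout⟩)
  · refine Set.union_subset (Set.union_subset ?_ (Set.sep_subset _ _)) (Set.sep_subset _ _)
    exact fun w ⟨h0, hlast, hsteps, hquad⟩ => ⟨h0, hlast, hsteps, fun k => Or.inl (hquad k).1⟩

lemma card_walks_coneC (hb : b ∈ quadQ) :
    walkCount squareSteps coneC a b n =
      walkCount squareSteps quadQ a b n + Nat.card (westExits a b n) +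
        Nat.card (southExits a b n) := by
  simp only [walkCount_eq_card, Nat.card_coe_set_eq]
  rw [walks_coneC_eq_union hb, Set.ncard_union_eq, Set.ncard_union_eq]
  · refine Set.disjoint_left.2 fun w hQ hW => ?_
    have := (hQ.2.2.2 (lastVisit quadQᶜ w)).1
    linarith [hW.2]
  · refine Set.disjoint_left.2 fun w hQW hS => ?_
    have hy := hS.2
    rcases hQW with hQ | hW
    · linarith [(hQ.2.2.2 (lastVisit quadQᶜ w)).2]
    · rcases hS.1.2.2.2 (lastVisit quadQᶜ w) with h | h <;> linarith [hW.2]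

end Decomposition

end ThreeQuadrant

theorem square_threeQuadrant_reflection_identity (i j : ℤ) (hi : 0 ≤ i) (hj : 0 ≤ j) (n : ℕ) :
    walkCount squareSteps coneC (0, 0) (i, j) n =
      walkCount squareSteps quadQ (0, 0) (i, j) n +
        walkCount squareSteps coneC (0, 0) (-i - 2, j) n +
        walkCount squareSteps coneC (0, 0) (i, -j - 2) n := by
  have ha : ((0 : ℤ), (0 : ℤ)) ∈ quadQ := ⟨le_rfl, le_rfl⟩
  have hb : (i, j) ∈ quadQ := ⟨hi, hj⟩
  rw [ThreeQuadrant.card_walks_coneC hb, ThreeQuadrant.card_westExits ha hb,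
    ThreeQuadrant.card_southExits ha hb]
end

section
/- For all integers i ≥ 0, j ≥ 0 and all n ≥ 0, let c_{i,j}(n) denote the number of diagonal-lattice walks of length n from (0,0) to (i,j) confined to the three-quadrant cone C, and let q_{i,j}(n) denote the number of diagonal-lattice walks of length n from (0,0) to (i,j) confined to the quadrant Q. Then c_{i,j}(n) = q_{i,j}(n) + c_{−i−2,j}(n) + c_{i,−j−2}(n). -/
/-!
A diagonal walk is a pair of independent `±1` walks, one for each coordinate. A walk in `C`
that leaves `Q` has to touch one of the lines `x = -1`, `y = -1`. If its last such touch is on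
`x = -1`, the walk stays in `y ≥ 0` from then on, so reflecting the rest of it in `x = -1`
gives a walk in `C` ending at `(-i-2, j)`. Conversely, a walk in `C` ending at `(-i-2, j)` has to
cross `x = -1`, lies strictly left of that line after its last visit and hence in `y ≥ 0`, and
reflecting back undoes the first map. Touches of `y = -1` are handled by swapping coordinates.
-/

open Set Function

lemma Function.Involutive.ncard_eq_of_mapsTo {α : Type*} {f : α → α} (hf : Involutive f)
    {s t : Set α} (hst : MapsTo f s t) (hts : MapsTo f t s) : s.ncard = t.ncard :=
  (InvOn.bijOn ⟨fun x _ => hf x, fun x _ => hf x⟩ hst hts).ncard_eq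

namespace DiagonalWalk

section SimpleWalk

variable {n : ℕ}

def IsSimpleWalk (g : Fin (n + 1) → ℤ) : Prop :=
  ∀ k : Fin n, g k.succ - g k.castSucc = 1 ∨ g k.succ - g k.castSucc = -1

lemma IsSimpleWalk.sub_one_le {g : Fin (n + 1) → ℤ} (hg : IsSimpleWalk g) (k : Fin n) :
    g k.castSucc - 1 ≤ g k.succ := by
  have := hg k
  omega

lemma exists_eq_of_sub_one_le {g : Fin (n + 1) → ℤ}
    (hg : ∀ k : Fin n, g k.castSucc - 1 ≤ g k.succ) {c : ℤ} {a b : Fin (n + 1)} (hab : a ≤ b)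
    (ha : c ≤ g a) (hb : g b ≤ c) :
    ∃ m, a ≤ m ∧ m ≤ b ∧ g m = c := by
  induction b using Fin.induction with
  | zero => exact ⟨0, hab, le_rfl, le_antisymm hb (Fin.le_zero_iff.1 hab ▸ ha)⟩
  | succ i ih =>
    rcases hab.lt_or_eq with hlt | rfl
    · by_cases hi : g i.castSucc ≤ c
      · obtain ⟨m, ham, hmi, hm⟩ := ih (Fin.le_castSucc_iff.2 hlt) hi
        exact ⟨m, ham, hmi.trans i.castSucc_le_succ, hm⟩
      · exact ⟨i.succ, hlt.le, le_rfl, by have := hg i; omega⟩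
    · exact ⟨_, le_rfl, le_rfl, le_antisymm hb ha⟩

end SimpleWalk

section Reflection

variable {ι : Type*} [Preorder ι]

open Classical in
noncomputable def reflectAfterLastHit (g : ι → ℤ) (k : ι) : ℤ :=
  if ∃ m, k ≤ m ∧ g m = -1 then g k else -2 - g k

variable {g : ι → ℤ} {k : ι}

lemma reflectAfterLastHit_of_le {m : ι} (hkm : k ≤ m) (hm : g m = -1) :
    reflectAfterLastHit g k = g k :=
  if_pos ⟨m, hkm, hm⟩

lemma reflectAfterLastHit_of_forall_ne (h : ∀ m, k ≤ m → g m ≠ -1) :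
    reflectAfterLastHit g k = -2 - g k :=
  if_neg fun ⟨m, hkm, hm⟩ => h m hkm hm

lemma reflectAfterLastHit_eq_neg_one_iff : reflectAfterLastHit g k = -1 ↔ g k = -1 := by
  unfold reflectAfterLastHit
  split_ifs <;> omega

lemma reflectAfterLastHit_involutive : Involutive (reflectAfterLastHit (ι := ι)) := by
  intro g
  funext k
  by_cases h : ∃ m, k ≤ m ∧ g m = -1
  · obtain ⟨m, hkm, hm⟩ := h
    rw [reflectAfterLastHit_of_le hkm (reflectAfterLastHit_eq_neg_one_iff.2 hm),
      reflectAfterLastHit_of_le hkm hm]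
  · push Not at h
    rw [reflectAfterLastHit_of_forall_ne fun m hkm =>
        reflectAfterLastHit_eq_neg_one_iff.not.2 (h m hkm),
      reflectAfterLastHit_of_forall_ne h, sub_sub_cancel]

lemma IsSimpleWalk.reflectAfterLastHit {n : ℕ} {g : Fin (n + 1) → ℤ} (hg : IsSimpleWalk g) :
    IsSimpleWalk (reflectAfterLastHit g) := by
  intro k
  have hk := hg k
  by_cases hs : ∃ m, k.succ ≤ m ∧ g m = -1
  · obtain ⟨m, hm, hgm⟩ := hs
    rwa [reflectAfterLastHit_of_le hm hgm,
      reflectAfterLastHit_of_le (k.castSucc_le_succ.trans hm) hgm]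
  push Not at hs
  rw [reflectAfterLastHit_of_forall_ne hs]
  by_cases hc : g k.castSucc = -1
  · rw [reflectAfterLastHit_of_le le_rfl hc]
    omega
  · have hc' : ∀ m, k.castSucc ≤ m → g m ≠ -1 := fun m hm =>
      hm.lt_or_eq.elim (fun h => hs m (Fin.castSucc_lt_iff_succ_le.1 h)) (fun h => h ▸ hc)
    rw [reflectAfterLastHit_of_forall_ne hc']
    omega

end Reflection

section Walks

variable {n : ℕ} {S R : Set (ℤ × ℤ)} {a b : ℤ × ℤ}

def walkSet (S R : Set (ℤ × ℤ)) (a b : ℤ × ℤ) (n : ℕ) : Set (Fin (n + 1) → ℤ × ℤ) :=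
  {w | w 0 = a ∧ w (Fin.last n) = b ∧ (∀ k : Fin n, w k.succ - w k.castSucc ∈ S) ∧ ∀ k, w k ∈ R}

lemma walkCount_eq_ncard : walkCount S R a b n = (walkSet S R a b n).ncard :=
  (Nat.card_coe_set_eq _).symm

lemma walkSet_finite (hS : S.Finite) : (walkSet S R a b n).Finite := by
  refine Finite.of_injOn (f := fun w (k : Fin n) => w k.succ - w k.castSucc)
    (t := univ.pi fun _ => S) (fun w hw => mem_univ_pi.2 hw.2.2.1) (fun v hv w hw hvw => ?_)
    (Finite.pi fun _ => hS)
  funext k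
  induction k using Fin.induction with
  | zero => exact hv.1.trans hw.1.symm
  | succ i ih => rw [← sub_add_cancel (v i.succ) (v i.castSucc), congrFun hvw i, ih, sub_add_cancel]

lemma walkSet_mono {R' : Set (ℤ × ℤ)} (hR : R ⊆ R') : walkSet S R a b n ⊆ walkSet S R' a b n :=
  fun _ ⟨h0, hlast, hsteps, hR'⟩ => ⟨h0, hlast, hsteps, fun k => hR (hR' k)⟩

lemma swap_comp_mem_walkSet (hS : MapsTo Prod.swap S S) (hR : MapsTo Prod.swap R R)
    {w : Fin (n + 1) → ℤ × ℤ} (hw : w ∈ walkSet S R a b n) :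
    Prod.swap ∘ w ∈ walkSet S R a.swap b.swap n := by
  obtain ⟨h0, hlast, hsteps, hR'⟩ := hw
  refine ⟨by simp [h0], by simp [hlast], fun k => ?_, fun k => hR (hR' k)⟩
  simpa only [comp_apply, ← Prod.swap_sub] using hS (hsteps k)

lemma walkCount_swap (hS : MapsTo Prod.swap S S) (hR : MapsTo Prod.swap R R) :
    walkCount S R a b n = walkCount S R a.swap b.swap n := by
  rw [walkCount_eq_ncard, walkCount_eq_ncard]
  exact Involutive.ncard_eq_of_mapsTo (f := (Prod.swap ∘ ·)) (fun w => rfl)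
    (fun _ => swap_comp_mem_walkSet hS hR) (fun _ => swap_comp_mem_walkSet hS hR)

end Walks

section Diagonal

variable {n : ℕ} {w : Fin (n + 1) → ℤ × ℤ}

lemma mem_diagSteps_iff {d : ℤ × ℤ} :
    d ∈ diagSteps ↔ (d.1 = 1 ∨ d.1 = -1) ∧ (d.2 = 1 ∨ d.2 = -1) := by
  obtain ⟨x, y⟩ := d
  simp only [diagSteps, mem_insert_iff, mem_singleton_iff, Prod.mk.injEq]
  tauto

lemma forall_step_mem_diagSteps_iff : (∀ k : Fin n, w k.succ - w k.castSucc ∈ diagSteps) ↔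
    IsSimpleWalk (fun k => (w k).1) ∧ IsSimpleWalk (fun k => (w k).2) := by
  simp only [mem_diagSteps_iff, Prod.fst_sub, Prod.snd_sub, IsSimpleWalk, forall_and]

lemma diagSteps_finite : diagSteps.Finite := by
  simp only [diagSteps, finite_insert, finite_singleton]

lemma mapsTo_swap_diagSteps : MapsTo Prod.swap diagSteps diagSteps := fun d hd => by
  rw [mem_diagSteps_iff] at hd ⊢
  exact hd.symm

lemma mapsTo_swap_coneC : MapsTo Prod.swap coneC coneC := fun _ hp => Or.symm hp

lemma quadQ_subset_coneC : quadQ ⊆ coneC := fun _ hp => Or.inl hp.1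

end Diagonal

section Partition

variable {n : ℕ} {a b : ℤ × ℤ} {w : Fin (n + 1) → ℤ × ℤ}

def TouchesLeftThenUpper (w : Fin (n + 1) → ℤ × ℤ) : Prop :=
  ∃ k, (w k).1 = -1 ∧ ∀ m, k ≤ m → 0 ≤ (w m).2

lemma touchesLeftThenUpper_of_last (hw : w ∈ walkSet diagSteps coneC a b n) {T : Fin (n + 1)}
    (hT : (w T).1 = -1) (hlast : ∀ m, (w m).2 = -1 → m ≤ T) : TouchesLeftThenUpper w := by
  obtain ⟨-, -, hsteps, hC⟩ := hw
  refine ⟨T, hT, fun m hTm => ?_⟩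
  by_contra! hneg
  have hyT : 0 ≤ (w T).2 := (hC T).resolve_left (by omega)
  obtain ⟨m', hTm', -, hm'⟩ := exists_eq_of_sub_one_le (g := fun k => (w k).2)
    (forall_step_mem_diagSteps_iff.1 hsteps).2.sub_one_le hTm
    (show -1 ≤ (w T).2 by omega) (show (w m).2 ≤ -1 by omega)
  rw [le_antisymm (hlast m' hm') hTm'] at hm'
  omega

lemma walkSet_coneC_eq_union (ha₁ : -1 ≤ a.1) (ha₂ : -1 ≤ a.2) :
    walkSet diagSteps coneC a b n = walkSet diagSteps quadQ a b n ∪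
      {w ∈ walkSet diagSteps coneC a b n | TouchesLeftThenUpper w} ∪
      {w ∈ walkSet diagSteps coneC a b n | TouchesLeftThenUpper (Prod.swap ∘ w)} := by
  refine subset_antisymm (fun w hw => ?_) <| union_subset
    (union_subset (walkSet_mono quadQ_subset_coneC) (sep_subset _ _)) (sep_subset _ _)
  by_cases hQ : ∀ k, w k ∈ quadQ
  · exact Or.inl (Or.inl ⟨hw.1, hw.2.1, hw.2.2.1, hQ⟩)
  obtain ⟨m, hm⟩ := not_forall.1 hQ
  obtain ⟨hx, hy⟩ := forall_step_mem_diagSteps_iff.1 hw.2.2.1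
  have hhit : ∃ k, (w k).1 = -1 ∨ (w k).2 = -1 := by
    simp only [quadQ, mem_ofPred_eq, not_and_or, not_le] at hm
    rcases hm with hm | hm
    · obtain ⟨k, -, -, hk⟩ := exists_eq_of_sub_one_le (g := fun k => (w k).1) hx.sub_one_le
        (Fin.zero_le m) (show -1 ≤ (w 0).1 by rw [hw.1]; exact ha₁) (show (w m).1 ≤ -1 by omega)
      exact ⟨k, Or.inl hk⟩
    · obtain ⟨k, -, -, hk⟩ := exists_eq_of_sub_one_le (g := fun k => (w k).2) hy.sub_one_le
        (Fin.zero_le m) (show -1 ≤ (w 0).2 by rw [hw.1]; exact ha₂) (show (w m).2 ≤ -1 by omega)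
      exact ⟨k, Or.inr hk⟩
  obtain ⟨T, hT, hmax⟩ := exists_max_image {k | (w k).1 = -1 ∨ (w k).2 = -1} id (toFinite _) hhit
  rcases hT with hT | hT
  · exact Or.inl (Or.inr ⟨hw, touchesLeftThenUpper_of_last hw hT fun m hm => hmax m (Or.inr hm)⟩)
  · exact Or.inr ⟨hw, touchesLeftThenUpper_of_last
      (swap_comp_mem_walkSet mapsTo_swap_diagSteps mapsTo_swap_coneC hw) hT
      fun m hm => hmax m (Or.inl hm)⟩

lemma ncard_walkSet_coneC (ha₁ : -1 ≤ a.1) (ha₂ : -1 ≤ a.2) :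
    (walkSet diagSteps coneC a b n).ncard = (walkSet diagSteps quadQ a b n).ncard +
      {w ∈ walkSet diagSteps coneC a b n | TouchesLeftThenUpper w}.ncard +
      {w ∈ walkSet diagSteps coneC a b n | TouchesLeftThenUpper (Prod.swap ∘ w)}.ncard := by
  have hfin : (walkSet diagSteps coneC a b n).Finite := walkSet_finite diagSteps_finite
  have hQX : Disjoint (walkSet diagSteps quadQ a b n)
      {w ∈ walkSet diagSteps coneC a b n | TouchesLeftThenUpper w} :=
    disjoint_left.2 fun w hQ ⟨_, k, hk, _⟩ => by have := (hQ.2.2.2 k).1; omega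
  have hQY : Disjoint (walkSet diagSteps quadQ a b n)
      {w ∈ walkSet diagSteps coneC a b n | TouchesLeftThenUpper (Prod.swap ∘ w)} :=
    disjoint_left.2 fun w hQ ⟨_, k, hk, _⟩ => by
      simp only [comp_apply, Prod.fst_swap] at hk
      have := (hQ.2.2.2 k).2
      omega
  have hXY : Disjoint {w ∈ walkSet diagSteps coneC a b n | TouchesLeftThenUpper w}
      {w ∈ walkSet diagSteps coneC a b n | TouchesLeftThenUpper (Prod.swap ∘ w)} := by
    refine disjoint_left.2 fun w ⟨_, k, hkx, hky⟩ ⟨_, l, hlx, hly⟩ => ?_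
    simp only [comp_apply, Prod.fst_swap, Prod.snd_swap] at hlx hly
    rcases le_total k l with h | h
    · have := hky l h; omega
    · have := hly k h; omega
  conv_lhs => rw [walkSet_coneC_eq_union ha₁ ha₂]
  rw [ncard_union_eq (disjoint_union_left.2 ⟨hQY, hXY⟩)
      ((walkSet_finite diagSteps_finite).union (hfin.subset (sep_subset _ _)))
      (hfin.subset (sep_subset _ _)),
    ncard_union_eq hQX (walkSet_finite diagSteps_finite) (hfin.subset (sep_subset _ _))]

end Partition

section ReflectedWalk

variable {n : ℕ} {a b : ℤ × ℤ} {w : Fin (n + 1) → ℤ × ℤ}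

noncomputable def reflectFst (w : Fin (n + 1) → ℤ × ℤ) : Fin (n + 1) → ℤ × ℤ :=
  fun k => (reflectAfterLastHit (fun m => (w m).1) k, (w k).2)

lemma reflectFst_involutive : Involutive (reflectFst (n := n)) := fun w => by
  funext k
  simp only [reflectFst]
  rw [reflectAfterLastHit_involutive]

lemma reflectFst_of_le {k m : Fin (n + 1)} (hkm : k ≤ m) (hm : (w m).1 = -1) :
    reflectFst w k = w k := by
  simp only [reflectFst, reflectAfterLastHit_of_le (g := fun m => (w m).1) hkm hm]

lemma reflectFst_of_forall_ne {k : Fin (n + 1)} (h : ∀ m, k ≤ m → (w m).1 ≠ -1) :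
    reflectFst w k = (-2 - (w k).1, (w k).2) := by
  simp only [reflectFst, reflectAfterLastHit_of_forall_ne h]

lemma reflectFst_steps (hw : ∀ k : Fin n, w k.succ - w k.castSucc ∈ diagSteps) :
    ∀ k : Fin n, reflectFst w k.succ - reflectFst w k.castSucc ∈ diagSteps := by
  obtain ⟨hx, hy⟩ := forall_step_mem_diagSteps_iff.1 hw
  exact forall_step_mem_diagSteps_iff.2 ⟨hx.reflectAfterLastHit, hy⟩

lemma reflectFst_mem_walkSet (hb : 0 ≤ b.1) (hw : w ∈ walkSet diagSteps coneC a b n)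
    (hleft : TouchesLeftThenUpper w) :
    reflectFst w ∈ walkSet diagSteps coneC a (-b.1 - 2, b.2) n := by
  obtain ⟨h0, hlast, hsteps, hC⟩ := hw
  obtain ⟨k₀, hk₀, hup⟩ := hleft
  refine ⟨by rw [reflectFst_of_le (Fin.zero_le k₀) hk₀, h0], ?_, reflectFst_steps hsteps,
    fun k => ?_⟩
  · rw [reflectFst_of_forall_ne fun m hm => by rw [Fin.last_le_iff.1 hm, hlast]; omega, hlast]
    exact Prod.ext (by ring) rfl
  · by_cases h : ∃ m, k ≤ m ∧ (w m).1 = -1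
    · obtain ⟨m, hkm, hm⟩ := h
      rw [reflectFst_of_le hkm hm]
      exact hC k
    · push Not at h
      rw [reflectFst_of_forall_ne h]
      exact Or.inr (hup k (le_of_not_ge fun hk => h k₀ hk hk₀))

lemma reflectFst_mem_touchesLeftThenUpper (ha : -1 ≤ a.1) (hb : 0 ≤ b.1)
    (hw : w ∈ walkSet diagSteps coneC a (-b.1 - 2, b.2) n) :
    reflectFst w ∈ {w ∈ walkSet diagSteps coneC a b n | TouchesLeftThenUpper w} := by
  obtain ⟨h0, hlast, hsteps, hC⟩ := hw
  have hx := (forall_step_mem_diagSteps_iff.1 hsteps).1.sub_one_le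
  have hend : (w (Fin.last n)).1 ≤ -1 := by rw [hlast]; simp only; omega
  have hhit : ∃ k, (w k).1 = -1 := by
    obtain ⟨k, -, -, hk⟩ := exists_eq_of_sub_one_le (g := fun k => (w k).1) hx (Fin.zero_le _)
      (show -1 ≤ (w 0).1 by rw [h0]; exact ha) hend
    exact ⟨k, hk⟩
  have hleft : ∀ k, (∀ m, k ≤ m → (w m).1 ≠ -1) → (w k).1 ≤ -2 := by
    intro k hk
    by_contra! hk'
    obtain ⟨m, hkm, -, hm⟩ := exists_eq_of_sub_one_le (g := fun k => (w k).1) hx (Fin.le_last k)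
      (show -1 ≤ (w k).1 by omega) hend
    exact hk m hkm hm
  obtain ⟨T, hT : (w T).1 = -1, hmax⟩ := exists_max_image {k | (w k).1 = -1} id (toFinite _) hhit
  have hafter : ∀ k, T < k → ∀ m, k ≤ m → (w m).1 ≠ -1 :=
    fun k hTk m hkm hm => (hTk.trans_le hkm).not_ge (hmax m hm)
  refine ⟨⟨by rw [reflectFst_of_le (Fin.zero_le T) hT, h0], ?_, reflectFst_steps hsteps,
    fun k => ?_⟩, T, by rw [reflectFst_of_le le_rfl hT, hT], fun m hTm => ?_⟩
  · rw [reflectFst_of_forall_ne fun m hm => by rw [Fin.last_le_iff.1 hm, hlast]; simp only; omega,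
      hlast]
    exact Prod.ext (by dsimp only; ring) rfl
  · by_cases h : ∃ m, k ≤ m ∧ (w m).1 = -1
    · obtain ⟨m, hkm, hm⟩ := h
      rw [reflectFst_of_le hkm hm]
      exact hC k
    · push Not at h
      rw [reflectFst_of_forall_ne h]
      have := hleft k h
      exact Or.inl (by simp only; omega)
  · show 0 ≤ (w m).2
    rcases hTm.lt_or_eq with hTm | rfl
    · exact (hC m).resolve_left (by have := hleft m (hafter m hTm); omega)
    · exact (hC T).resolve_left (by omega)

lemma ncard_touchesLeftThenUpper (ha : -1 ≤ a.1) (hb : 0 ≤ b.1) :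
    {w ∈ walkSet diagSteps coneC a b n | TouchesLeftThenUpper w}.ncard =
      walkCount diagSteps coneC a (-b.1 - 2, b.2) n := by
  rw [walkCount_eq_ncard]
  exact reflectFst_involutive.ncard_eq_of_mapsTo (fun w hw => reflectFst_mem_walkSet hb hw.1 hw.2)
    (fun w hw => reflectFst_mem_touchesLeftThenUpper ha hb hw)

lemma ncard_touchesLeftThenUpper_swap (ha : -1 ≤ a.2) (hb : 0 ≤ b.2) :
    {w ∈ walkSet diagSteps coneC a b n | TouchesLeftThenUpper (Prod.swap ∘ w)}.ncard =
      walkCount diagSteps coneC a (b.1, -b.2 - 2) n := calc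
  _ = {w ∈ walkSet diagSteps coneC a.swap b.swap n | TouchesLeftThenUpper w}.ncard := by
    refine Involutive.ncard_eq_of_mapsTo (f := (Prod.swap ∘ ·)) (fun w => rfl) ?_ ?_ <;>
      exact fun _ hw => ⟨swap_comp_mem_walkSet mapsTo_swap_diagSteps mapsTo_swap_coneC hw.1, hw.2⟩
  _ = walkCount diagSteps coneC a.swap (-b.2 - 2, b.1) n := ncard_touchesLeftThenUpper ha hb
  _ = walkCount diagSteps coneC a (b.1, -b.2 - 2) n :=
    walkCount_swap mapsTo_swap_diagSteps mapsTo_swap_coneC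

end ReflectedWalk

end DiagonalWalk

open DiagonalWalk in
theorem diag_threeQuadrant_reflection_identity (i j : ℤ) (hi : 0 ≤ i) (hj : 0 ≤ j) (n : ℕ) :
    walkCount diagSteps coneC (0, 0) (i, j) n =
      walkCount diagSteps quadQ (0, 0) (i, j) n +
        walkCount diagSteps coneC (0, 0) (-i - 2, j) n +
        walkCount diagSteps coneC (0, 0) (i, -j - 2) n := by
  rw [walkCount_eq_ncard, walkCount_eq_ncard, ncard_walkSet_coneC (by norm_num) (by norm_num),
    ncard_touchesLeftThenUpper (by norm_num) hi, ncard_touchesLeftThenUpper_swap (by norm_num) hj]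
end

section
/- For all integers i ≥ 0, j ≥ 0 and all n ≥ 0, let c_{i,j}(n) denote the number of square-lattice walks of length n from (−1,0) to (i,j) confined to the three-quadrant cone C. Then c_{i,j}(n) = c_{−i−2,j}(n) + c_{i,−j−2}(n). -/
/-!
Split the walks ending at `(i, j)` according to whether they visit the line `y = -1` after their
last visit to the line `x = -1`. Reflecting in `x = -1` the part of a walk after its last visit to
that line matches the walks that do not with the walks ending at `(-i - 2, j)`; reflecting in
`y = -1` the part after the last visit to that line matches the walks that do with the walks
ending at `(i, -j - 2)`. Each map is an involution, because a reflection fixes its line and hence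
the time of the last visit, and the reflected part stays in the cone because it lies in the half
plane `y ≥ 0`, respectively `x ≥ 0`, which the reflection preserves.
-/

namespace ThreeQuadrant

open Set Function

variable {α : Type*} {n : ℕ}

def AvoidsFrom (L : Set α) (w : Fin (n + 1) → α) (k : Fin (n + 1)) : Prop :=
  ∀ m, k ≤ m → w m ∉ L

/-- Reflects by `r` the part of `w` after its last visit to `L` (all of `w` if there is none). -/
noncomputable def reflectTail (r : α → α) (L : Set α) (w : Fin (n + 1) → α) :
    Fin (n + 1) → α :=
  open Classical in fun k => if AvoidsFrom L w k then r (w k) else w k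

section Reflection

variable {r : α → α} {L L' : Set α} {w : Fin (n + 1) → α} {k : Fin (n + 1)}

theorem AvoidsFrom.mono {k' : Fin (n + 1)} (h : AvoidsFrom L w k) (hk : k ≤ k') :
    AvoidsFrom L w k' :=
  fun m hm => h m (hk.trans hm)

theorem avoidsFrom_castSucc_iff {k : Fin n} :
    AvoidsFrom L w k.castSucc ↔ w k.castSucc ∉ L ∧ AvoidsFrom L w k.succ := by
  refine ⟨fun h => ⟨h _ le_rfl, h.mono (Fin.castSucc_le_succ k)⟩, ?_⟩
  rintro ⟨hk, hsucc⟩ m hm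
  rcases hm.eq_or_lt with rfl | hlt
  · exact hk
  · exact hsucc m (Fin.castSucc_lt_iff_succ_le.mp hlt)

theorem avoidsFrom_last_iff : AvoidsFrom L w (Fin.last n) ↔ w (Fin.last n) ∉ L :=
  ⟨fun h => h _ le_rfl, fun h m hm => by rwa [Fin.last_le_iff.mp hm]⟩

theorem exists_last_mem (h : ∃ k, w k ∈ L) : ∃ t, w t ∈ L ∧ ∀ m, t < m → w m ∉ L := by
  obtain ⟨t, ht, hmax⟩ := (toFinite {k | w k ∈ L}).exists_maximal h
  exact ⟨t, ht, fun m hm hmL => (hmax hmL hm.le).not_gt hm⟩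

theorem reflectTail_of_avoidsFrom (h : AvoidsFrom L w k) : reflectTail r L w k = r (w k) :=
  if_pos h

theorem reflectTail_of_not_avoidsFrom (h : ¬AvoidsFrom L w k) : reflectTail r L w k = w k :=
  if_neg h

theorem reflectTail_mem_iff (hL : ∀ p, r p ∈ L ↔ p ∈ L) (k : Fin (n + 1)) :
    reflectTail r L' w k ∈ L ↔ w k ∈ L := by
  by_cases h : AvoidsFrom L' w k
  · rw [reflectTail_of_avoidsFrom h, hL]
  · rw [reflectTail_of_not_avoidsFrom h]

theorem avoidsFrom_reflectTail_iff (hL : ∀ p, r p ∈ L ↔ p ∈ L) :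
    AvoidsFrom L (reflectTail r L' w) k ↔ AvoidsFrom L w k :=
  forall₂_congr fun m _ => not_congr (reflectTail_mem_iff hL m)

theorem reflectTail_involutive (hr : Involutive r) (hL : ∀ p, r p ∈ L ↔ p ∈ L) :
    Involutive (reflectTail (n := n) r L) := by
  intro w
  funext k
  by_cases h : AvoidsFrom L w k
  · rw [reflectTail_of_avoidsFrom ((avoidsFrom_reflectTail_iff hL).2 h),
      reflectTail_of_avoidsFrom h, hr]
  · rw [reflectTail_of_not_avoidsFrom (mt (avoidsFrom_reflectTail_iff hL).1 h),
      reflectTail_of_not_avoidsFrom h]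

/-- A step into the reflected tail starts on `L`, where `r` is the identity. -/
theorem reflectTail_sub_mem [AddGroup α] {S : Set α} (hrS : ∀ p q, p - q ∈ S → r p - r q ∈ S)
    (hfix : ∀ p ∈ L, r p = p) (hw : ∀ k : Fin n, w k.succ - w k.castSucc ∈ S) (k : Fin n) :
    reflectTail r L w k.succ - reflectTail r L w k.castSucc ∈ S := by
  by_cases hsucc : AvoidsFrom L w k.succ
  · rw [reflectTail_of_avoidsFrom hsucc]
    by_cases hk : AvoidsFrom L w k.castSucc
    · rw [reflectTail_of_avoidsFrom hk]
      exact hrS _ _ (hw k)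
    · have hmem : w k.castSucc ∈ L := by simpa [avoidsFrom_castSucc_iff, hsucc] using hk
      rw [reflectTail_of_not_avoidsFrom hk]
      simpa only [hfix _ hmem] using hrS _ _ (hw k)
  · have hk : ¬AvoidsFrom L w k.castSucc := fun h => hsucc (h.mono (Fin.castSucc_le_succ k))
    rw [reflectTail_of_not_avoidsFrom hsucc, reflectTail_of_not_avoidsFrom hk]
    exact hw k

end Reflection

theorem lt_of_forall_ne_of_le_last {f : Fin (n + 1) → ℤ}
    (hf : ∀ k : Fin n, |f k.succ - f k.castSucc| ≤ 1) {c : ℤ} (hlast : c ≤ f (Fin.last n))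
    {k : Fin (n + 1)} (hk : ∀ m, k ≤ m → f m ≠ c) : c < f k := by
  induction k using Fin.reverseInduction with
  | last => exact lt_of_le_of_ne hlast (hk _ le_rfl).symm
  | cast i ih =>
    have hsucc := ih fun m hm => hk m ((Fin.castSucc_le_succ i).trans hm)
    have hi := hk _ le_rfl
    have := abs_le.mp (hf i)
    omega

theorem lt_of_forall_ne_of_last_le {f : Fin (n + 1) → ℤ}
    (hf : ∀ k : Fin n, |f k.succ - f k.castSucc| ≤ 1) {c : ℤ} (hlast : f (Fin.last n) ≤ c)
    {k : Fin (n + 1)} (hk : ∀ m, k ≤ m → f m ≠ c) : f k < c := by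
  have := lt_of_forall_ne_of_le_last (f := (- f ·)) (c := -c)
    (fun k => by rw [← abs_neg]; convert hf k using 2; ring) (neg_le_neg hlast)
    (fun m hm => by simpa using hk m hm)
  omega

theorem ncard_eq_of_involutive {f : α → α} (hf : Involutive f) {s t : Set α}
    (hst : MapsTo f s t) (hts : MapsTo f t s) : s.ncard = t.ncard :=
  (InvOn.bijOn ⟨fun x _ => hf x, fun x _ => hf x⟩ hst hts).ncard_eq

def walkSet [AddGroup α] (steps region : Set α) (a b : α) (n : ℕ) : Set (Fin (n + 1) → α) :=
  {w | w 0 = a ∧ w (Fin.last n) = b ∧ (∀ k : Fin n, w k.succ - w k.castSucc ∈ steps) ∧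
    ∀ k, w k ∈ region}

theorem walkCount_eq_ncard (steps region : Set (ℤ × ℤ)) (a b : ℤ × ℤ) (n : ℕ) :
    walkCount steps region a b n = (walkSet steps region a b n).ncard :=
  Nat.card_coe_set_eq _

/-- A walk is determined by its start and its sequence of steps. -/
theorem walkSet_finite [AddGroup α] {steps : Set α} (hsteps : steps.Finite) (region : Set α)
    (a b : α) (n : ℕ) : (walkSet steps region a b n).Finite := by
  let increments : (Fin (n + 1) → α) → Fin n → α := fun w k => w k.succ - w k.castSucc
  refine .of_finite_image (f := increments) ((Finite.pi fun _ => hsteps).subset ?_) ?_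
  · rintro _ ⟨w, hw, rfl⟩ k -
    exact hw.2.2.1 k
  · intro w hw w' hw' h
    funext k
    induction k using Fin.induction with
    | zero => rw [hw.1, hw'.1]
    | succ k ih =>
      have hk := congrFun h k
      simp only [increments] at hk
      rw [← sub_add_cancel (w k.succ) (w k.castSucc), hk, ih, sub_add_cancel]

theorem reflectTail_mem_walkSet [AddGroup α] {r : α → α} {L : Set α} {w : Fin (n + 1) → α}
    {steps region : Set α} {a b : α} (hw : w ∈ walkSet steps region a b n)
    (hr : ∀ p q, p - q ∈ steps → r p - r q ∈ steps) (hfix : ∀ p ∈ L, r p = p)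
    (hvisits : ¬AvoidsFrom L w 0) (hb : b ∉ L)
    (hregion : ∀ k, AvoidsFrom L w k → r (w k) ∈ region) :
    reflectTail r L w ∈ walkSet steps region a (r b) n := by
  obtain ⟨hstart, hend, hsteps, hw⟩ := hw
  refine ⟨?_, ?_, reflectTail_sub_mem hr hfix hsteps, fun k => ?_⟩
  · rw [reflectTail_of_not_avoidsFrom hvisits, hstart]
  · rw [reflectTail_of_avoidsFrom (avoidsFrom_last_iff.2 (hend ▸ hb)), hend]
  · by_cases hk : AvoidsFrom L w k
    · rw [reflectTail_of_avoidsFrom hk]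
      exact hregion k hk
    · rw [reflectTail_of_not_avoidsFrom hk]
      exact hw k

def vertLine : Set (ℤ × ℤ) := {p | p.1 = -1}

def horizLine : Set (ℤ × ℤ) := {p | p.2 = -1}

def reflVert (p : ℤ × ℤ) : ℤ × ℤ := (-2 - p.1, p.2)

def reflHoriz (p : ℤ × ℤ) : ℤ × ℤ := (p.1, -2 - p.2)

theorem reflVert_involutive : Involutive reflVert := fun p => by simp [reflVert]

theorem reflHoriz_involutive : Involutive reflHoriz := fun p => by simp [reflHoriz]

theorem reflVert_eq_self {p : ℤ × ℤ} (hp : p ∈ vertLine) : reflVert p = p :=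
  Prod.ext (show -2 - p.1 = p.1 by have : p.1 = -1 := hp; omega) rfl

theorem reflHoriz_eq_self {p : ℤ × ℤ} (hp : p ∈ horizLine) : reflHoriz p = p :=
  Prod.ext rfl (show -2 - p.2 = p.2 by have : p.2 = -1 := hp; omega)

theorem reflVert_mem_vertLine_iff (p : ℤ × ℤ) : reflVert p ∈ vertLine ↔ p ∈ vertLine :=
  show -2 - p.1 = -1 ↔ p.1 = -1 by omega

theorem reflHoriz_mem_horizLine_iff (p : ℤ × ℤ) : reflHoriz p ∈ horizLine ↔ p ∈ horizLine :=
  show -2 - p.2 = -1 ↔ p.2 = -1 by omega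

theorem reflVert_mem_horizLine_iff (p : ℤ × ℤ) : reflVert p ∈ horizLine ↔ p ∈ horizLine :=
  Iff.rfl

theorem reflHoriz_mem_vertLine_iff (p : ℤ × ℤ) : reflHoriz p ∈ vertLine ↔ p ∈ vertLine :=
  Iff.rfl

theorem mem_squareSteps_iff {d : ℤ × ℤ} :
    d ∈ squareSteps ↔ d = (1, 0) ∨ d = (-1, 0) ∨ d = (0, 1) ∨ d = (0, -1) := by
  simp [squareSteps]

theorem squareSteps_finite : squareSteps.Finite := by
  unfold squareSteps
  exact toFinite _

theorem abs_le_one_of_mem_squareSteps_s12 {d : ℤ × ℤ} (h : d ∈ squareSteps) :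
    |d.1| ≤ 1 ∧ |d.2| ≤ 1 := by
  rw [mem_squareSteps_iff] at h
  rcases h with rfl | rfl | rfl | rfl <;> simp

theorem reflVert_sub_mem_squareSteps {p q : ℤ × ℤ} (h : p - q ∈ squareSteps) :
    reflVert p - reflVert q ∈ squareSteps := by
  rw [mem_squareSteps_iff] at h ⊢
  rcases h with h | h | h | h <;> simp [Prod.ext_iff, reflVert] at h ⊢ <;> omega

theorem reflHoriz_sub_mem_squareSteps {p q : ℤ × ℤ} (h : p - q ∈ squareSteps) :
    reflHoriz p - reflHoriz q ∈ squareSteps := by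
  rw [mem_squareSteps_iff] at h ⊢
  rcases h with h | h | h | h <;> simp [Prod.ext_iff, reflHoriz] at h ⊢ <;> omega

section SquareWalks

variable {w : Fin (n + 1) → ℤ × ℤ}

theorem abs_fst_sub_le_one (hw : ∀ k : Fin n, w k.succ - w k.castSucc ∈ squareSteps)
    (k : Fin n) : |(w k.succ).1 - (w k.castSucc).1| ≤ 1 := by
  simpa using (abs_le_one_of_mem_squareSteps_s12 (hw k)).1

theorem abs_snd_sub_le_one (hw : ∀ k : Fin n, w k.succ - w k.castSucc ∈ squareSteps)
    (k : Fin n) : |(w k.succ).2 - (w k.castSucc).2| ≤ 1 := by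
  simpa using (abs_le_one_of_mem_squareSteps_s12 (hw k)).2

def VisitsHorizAfterVert (w : Fin (n + 1) → ℤ × ℤ) : Prop :=
  ∃ k, AvoidsFrom vertLine w k ∧ w k ∈ horizLine

theorem visitsHorizAfterVert_reflectTail_iff {r : ℤ × ℤ → ℤ × ℤ} {L : Set (ℤ × ℤ)}
    (hvert : ∀ p, r p ∈ vertLine ↔ p ∈ vertLine) (hhoriz : ∀ p, r p ∈ horizLine ↔ p ∈ horizLine) :
    VisitsHorizAfterVert (reflectTail r L w) ↔ VisitsHorizAfterVert w :=
  exists_congr fun k => and_congr (avoidsFrom_reflectTail_iff hvert) (reflectTail_mem_iff hhoriz k)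

local notation "walksTo" => walkSet squareSteps coneC (-1, 0)

theorem not_visitsHorizAfterVert_of_fst_le {x y : ℤ} (hx : x ≤ -1) (hw : w ∈ walksTo (x, y) n) :
    ¬VisitsHorizAfterVert w := by
  obtain ⟨-, hend, hsteps, hcone⟩ := hw
  rintro ⟨k, hk, hy⟩
  have hxk : (w k).1 < -1 :=
    lt_of_forall_ne_of_last_le (abs_fst_sub_le_one hsteps) (by rwa [hend]) hk
  have := hcone k
  simp only [coneC, horizLine, mem_ofPred_eq] at this hy
  omega

theorem visitsHorizAfterVert_of_snd_le {x y : ℤ} (hy : y ≤ -1) (hw : w ∈ walksTo (x, y) n) :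
    VisitsHorizAfterVert w := by
  obtain ⟨hstart, hend, hsteps, hcone⟩ := hw
  have hbelow : ∀ k, AvoidsFrom horizLine w k → (w k).2 < -1 := fun k hk =>
    lt_of_forall_ne_of_last_le (abs_snd_sub_le_one hsteps) (by rwa [hend]) hk
  have hvisit : ∃ k, w k ∈ horizLine := by
    by_contra! h
    have := hbelow 0 fun m _ => h m
    simp [hstart] at this
  obtain ⟨t, ht, hlast⟩ := exists_last_mem hvisit
  refine ⟨t, fun m htm hm => ?_, ht⟩
  have hneg : (w m).2 < 0 := by
    rcases htm.eq_or_lt with rfl | hlt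
    · simp only [horizLine, mem_ofPred_eq] at ht
      omega
    · have := hbelow m fun m' hm' => hlast m' (hlt.trans_le hm')
      omega
  have := hcone m
  simp only [coneC, vertLine, mem_ofPred_eq] at this hm
  omega

theorem mapsTo_reflectTail_reflVert {x y : ℤ} (hx : x ≠ -1) (hy : 0 ≤ y) :
    MapsTo (reflectTail reflVert vertLine) (walksTo (x, y) n \ {w | VisitsHorizAfterVert w})
      (walksTo (-2 - x, y) n \ {w | VisitsHorizAfterVert w}) := by
  rintro w ⟨hw, hnv⟩
  refine ⟨reflectTail_mem_walkSet hw (fun _ _ => reflVert_sub_mem_squareSteps)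
    (fun _ => reflVert_eq_self) (fun h => h 0 le_rfl (by simp [hw.1, vertLine]))
    (by simpa [vertLine] using hx) fun k hk => Or.inr ?_, ?_⟩
  · have hyk : -1 < (w k).2 := lt_of_forall_ne_of_le_last (abs_snd_sub_le_one hw.2.2.1)
      (by rw [hw.2.1]; dsimp only; omega) fun m hkm hm => hnv ⟨m, hk.mono hkm, hm⟩
    simp only [reflVert]
    omega
  · rwa [mem_ofPred_eq,
      visitsHorizAfterVert_reflectTail_iff reflVert_mem_vertLine_iff reflVert_mem_horizLine_iff]

theorem mapsTo_reflectTail_reflHoriz {x y : ℤ} (hx : 0 ≤ x) (hy : y ≠ -1) :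
    MapsTo (reflectTail reflHoriz horizLine) (walksTo (x, y) n ∩ {w | VisitsHorizAfterVert w})
      (walksTo (x, -2 - y) n ∩ {w | VisitsHorizAfterVert w}) := by
  rintro w ⟨hw, k₀, hk₀, hy₀⟩
  refine ⟨reflectTail_mem_walkSet hw (fun _ _ => reflHoriz_sub_mem_squareSteps)
    (fun _ => reflHoriz_eq_self) (fun h => h k₀ (Fin.zero_le _) hy₀)
    (by simpa [horizLine] using hy) fun k hk => Or.inl ?_, ?_⟩
  · have hk₀k : k₀ ≤ k := le_of_not_ge fun hkk₀ => hk k₀ hkk₀ hy₀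
    have hxk : -1 < (w k).1 := lt_of_forall_ne_of_le_last (abs_fst_sub_le_one hw.2.2.1)
      (by rw [hw.2.1]; dsimp only; omega) (hk₀.mono hk₀k)
    simp only [reflHoriz]
    omega
  · rw [mem_ofPred_eq,
      visitsHorizAfterVert_reflectTail_iff reflHoriz_mem_vertLine_iff reflHoriz_mem_horizLine_iff]
    exact ⟨k₀, hk₀, hy₀⟩

theorem ncard_walkSet_reflVert {i j : ℤ} (hi : 0 ≤ i) (hj : 0 ≤ j) :
    (walksTo (-i - 2, j) n).ncard = (walksTo (i, j) n \ {w | VisitsHorizAfterVert w}).ncard := by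
  refine ncard_eq_of_involutive (reflectTail_involutive reflVert_involutive
    reflVert_mem_vertLine_iff) (fun w hw => ?_) (fun w hw => ?_)
  · have := mapsTo_reflectTail_reflVert (by omega) hj
      ⟨hw, not_visitsHorizAfterVert_of_fst_le (by omega) hw⟩
    rwa [show -2 - (-i - 2) = i by ring] at this
  · have := (mapsTo_reflectTail_reflVert (by omega) hj hw).1
    rwa [show -2 - i = -i - 2 by ring] at this

theorem ncard_walkSet_reflHoriz {i j : ℤ} (hi : 0 ≤ i) (hj : 0 ≤ j) :
    (walksTo (i, -j - 2) n).ncard = (walksTo (i, j) n ∩ {w | VisitsHorizAfterVert w}).ncard := by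
  refine ncard_eq_of_involutive (reflectTail_involutive reflHoriz_involutive
    reflHoriz_mem_horizLine_iff) (fun w hw => ?_) (fun w hw => ?_)
  · have := mapsTo_reflectTail_reflHoriz hi (by omega)
      ⟨hw, visitsHorizAfterVert_of_snd_le (by omega) hw⟩
    rwa [show -2 - (-j - 2) = j by ring] at this
  · have := (mapsTo_reflectTail_reflHoriz hi (by omega) hw).1
    rwa [show -2 - j = -j - 2 by ring] at this

end SquareWalks

end ThreeQuadrant

open ThreeQuadrant Set in
theorem square_threeQuadrant_shifted_reflection_identity
    (i j : ℤ) (hi : 0 ≤ i) (hj : 0 ≤ j) (n : ℕ) :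
    walkCount squareSteps coneC (-1, 0) (i, j) n =
      walkCount squareSteps coneC (-1, 0) (-i - 2, j) n +
        walkCount squareSteps coneC (-1, 0) (i, -j - 2) n := by
  rw [walkCount_eq_ncard, walkCount_eq_ncard, walkCount_eq_ncard,
    ncard_walkSet_reflVert hi hj, ncard_walkSet_reflHoriz hi hj, add_comm (ncard _),
    ncard_inter_add_ncard_sdiff_eq_ncard _ _ (walkSet_finite squareSteps_finite _ _ _ _)]
end

section
/- For all integers i ≥ 0, j ≥ 0 and all n ≥ 0, let c_{i,j}(n) denote the number of diagonal-lattice walks of length n from (−2,0) to (i,j) confined to the three-quadrant cone C, and let q_{i,j}(n) denote the number of diagonal-lattice walks of length n from (0,0) to (i,j) confined to the quadrant Q. Then c_{i,j}(n) + q_{i,j}(n) = c_{−i−2,j}(n) + c_{i,−j−2}(n). -/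
/-!
Split the `C`-walks from `(-2,0)` to `(i,j)` according to whether they stay in `y ≥ 0` after
their last visit to the line `x = -1`. Those that do are matched, by reflecting that final
stretch in `x = -1`, with the `C`-walks to `(-i-2,j)` that visit the line. Those that do not
are exactly the walks that stay in `x ≥ 0` after their last visit to `y = -1` (the two last
visits cannot coincide since `(-1,-1) ∉ C`); after swapping the coordinates the same
reflection matches them with all `C`-walks to `(i,-j-2)`. Finally a `C`-walk to `(-i-2,j)`
that never reaches `x = -1` stays in `x ≤ -2, y ≥ 0`, and reflecting it in `x = -1` gives a
`Q`-walk from `(0,0)` to `(i,j)`.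
-/

theorem Nat.card_subtype_eq_card_and_add_card_and_not {α : Type*} {p q : α → Prop}
    [Finite {x // p x}] :
    Nat.card {x // p x} = Nat.card {x // p x ∧ q x} + Nat.card {x // p x ∧ ¬q x} := by
  classical
  rw [← Nat.card_congr (Equiv.sumCompl fun x : {x // p x} => q x), Nat.card_sum,
    Nat.card_congr (Equiv.subtypeSubtypeEquivSubtypeInter p q),
    Nat.card_congr (Equiv.subtypeSubtypeEquivSubtypeInter p (¬q ·))]

theorem lt_iff_lt_of_forall_ne {f : ℕ → ℤ} {c : ℤ} {m n : ℕ}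
    (hf : ∀ k, m ≤ k → k < n → |f (k + 1) - f k| ≤ 1) (hmn : m ≤ n)
    (hc : ∀ k, m ≤ k → k ≤ n → f k ≠ c) : f m < c ↔ f n < c := by
  induction n, hmn using Nat.le_induction with
  | base => rfl
  | succ n hmn ih =>
    have hstep := abs_le.mp (hf n hmn n.lt_succ_self)
    have hn := hc n hmn n.le_succ
    have hn' := hc (n + 1) (hmn.trans n.le_succ) le_rfl
    rw [ih (fun k hk hkn => hf k hk (hkn.trans n.lt_succ_self))
      (fun k hk hkn => hc k hk (hkn.trans n.le_succ))]
    omega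

theorem exists_eq_of_not_lt_iff_lt {f : ℕ → ℤ} {c : ℤ} {n : ℕ}
    (hf : ∀ k < n, |f (k + 1) - f k| ≤ 1) (h : ¬(f 0 < c ↔ f n < c)) :
    ∃ k ≤ n, f k = c := by
  by_contra! hc
  exact h (lt_iff_lt_of_forall_ne (fun k _ hk => hf k hk) n.zero_le fun k _ hk => hc k hk)

theorem lt_iff_lt_of_findGreatest_lt {f : ℕ → ℤ} {c : ℤ} {m n : ℕ}
    (hf : ∀ k < n, |f (k + 1) - f k| ≤ 1) (hm : Nat.findGreatest (f · = c) n < m)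
    (hmn : m ≤ n) : f m < c ↔ f n < c :=
  lt_iff_lt_of_forall_ne (fun k _ hk => hf k hk) hmn fun _ hk hkn =>
    Nat.findGreatest_is_greatest (hm.trans_le hk) hkn

/-- Walks are extended past time `n` by staying at `b`, so that the walks of `walkCount`
correspond to functions `ℕ → ℤ × ℤ`. -/
structure IsWalk (S R : Set (ℤ × ℤ)) (a b : ℤ × ℤ) (n : ℕ) (w : ℕ → ℤ × ℤ) : Prop where
  start : w 0 = a
  finish : ∀ k, n ≤ k → w k = b
  step : ∀ k < n, w (k + 1) - w k ∈ S
  mem : ∀ k ≤ n, w k ∈ R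

theorem walkCount_eq_card_isWalk (S R : Set (ℤ × ℤ)) (a b : ℤ × ℤ) (n : ℕ) :
    walkCount S R a b n = Nat.card {w // IsWalk S R a b n w} := by
  have clamp_of_le {k : ℕ} (hk : k ≤ n) : Fin.clamp k n = ⟨k, Nat.lt_succ_of_le hk⟩ :=
    Fin.ext (by simp [hk])
  refine Nat.card_congr
    { toFun := fun w => ⟨fun k => w.1 (Fin.clamp k n), ⟨?_, ?_, ?_, ?_⟩⟩
      invFun := fun w => ⟨fun k => w.1 k, ?_, ?_, ?_, ?_⟩
      left_inv := fun w => ?_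
      right_inv := fun w => ?_ }
  · simpa [clamp_of_le n.zero_le] using w.2.1
  · intro k hk
    simpa [Fin.clamp_eq_last k n hk] using w.2.2.1
  · intro k hk
    simpa [clamp_of_le hk, clamp_of_le hk.le] using w.2.2.2.1 ⟨k, hk⟩
  · exact fun k _ => w.2.2.2.2 _
  · exact w.2.start
  · exact w.2.finish n le_rfl
  · exact fun k => w.2.step k k.2
  · exact fun k => w.2.mem k (Nat.lt_succ_iff.mp k.2)
  · ext k : 2
    simp [clamp_of_le (Nat.lt_succ_iff.mp k.2)]
  · ext k : 2
    rcases le_total k n with hk | hk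
    · simp [clamp_of_le hk]
    · simp [Fin.clamp_eq_last k n hk, w.2.finish k hk, w.2.finish n le_rfl]

namespace IsWalk

variable {S R : Set (ℤ × ℤ)} {a b : ℤ × ℤ} {n : ℕ} {w : ℕ → ℤ × ℤ}

theorem finite (hS : S.Finite) : Finite {w // IsWalk S R a b n w} := by
  have := hS.to_subtype
  refine Finite.of_injective (fun w (k : Fin n) => (⟨_, w.2.step k k.2⟩ : S)) fun v w h => ?_
  ext k : 2
  induction k with
  | zero => rw [v.2.start, w.2.start]
  | succ k ih =>
    rcases lt_or_ge k n with hk | hk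
    · have : v.1 (k + 1) - v.1 k = w.1 (k + 1) - w.1 k :=
        congrArg Subtype.val (congrFun h ⟨k, hk⟩)
      rwa [ih, sub_left_inj] at this
    · rw [v.2.finish _ (hk.trans k.le_succ), w.2.finish _ (hk.trans k.le_succ)]

theorem map {S' R' : Set (ℤ × ℤ)} (hw : IsWalk S R a b n w) (φ : ℤ × ℤ → ℤ × ℤ)
    (hφ : ∀ p q, p - q ∈ S → φ p - φ q ∈ S') (hR : ∀ k ≤ n, φ (w k) ∈ R') :
    IsWalk S' R' (φ a) (φ b) n (φ ∘ w) where
  start := by simp [hw.start]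
  finish k hk := by simp [hw.finish k hk]
  step k hk := hφ _ _ (hw.step k hk)
  mem := hR

theorem splice (hw : IsWalk S R a b n w) (φ : ℤ × ℤ → ℤ × ℤ)
    (hφ : ∀ p q, p - q ∈ S → φ p - φ q ∈ S) {t : ℕ} (ht : t < n) (hfix : φ (w t) = w t)
    (hR : ∀ k, t < k → k ≤ n → φ (w k) ∈ R) :
    IsWalk S R a (φ b) n fun k => if k ≤ t then w k else φ (w k) where
  start := by simp [hw.start]
  finish k hk := by simp [show ¬k ≤ t by omega, hw.finish k hk]
  step k hk := by
    rcases lt_trichotomy k t with hkt | rfl | hkt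
    · simpa [hkt.le, Nat.succ_le_of_lt hkt] using hw.step k hk
    · have := hφ _ _ (hw.step k hk)
      rw [hfix] at this
      simpa using this
    · simpa [show ¬k ≤ t by omega, show ¬k + 1 ≤ t by omega] using hφ _ _ (hw.step k hk)
  mem k hk := by
    by_cases hkt : k ≤ t
    · simpa [hkt] using hw.mem k hk
    · simpa [hkt] using hR k (by omega) hk

theorem swap (hw : IsWalk S R a b n w) (hS : ∀ p ∈ S, p.swap ∈ S)
    (hR : ∀ p ∈ R, p.swap ∈ R) :
    IsWalk S R a.swap b.swap n (Prod.swap ∘ w) :=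
  hw.map Prod.swap (fun p q h => Prod.swap_sub p q ▸ hS _ h) fun k hk => hR _ (hw.mem k hk)

end IsWalk

theorem mem_diagSteps {p : ℤ × ℤ} :
    p ∈ diagSteps ↔ (p.1 = 1 ∨ p.1 = -1) ∧ (p.2 = 1 ∨ p.2 = -1) := by
  obtain ⟨x, y⟩ := p
  simp only [diagSteps, Set.mem_insert_iff, Set.mem_singleton_iff, Prod.mk.injEq]
  tauto

theorem swap_mem_diagSteps {p : ℤ × ℤ} (hp : p ∈ diagSteps) : p.swap ∈ diagSteps := by
  rw [mem_diagSteps] at hp ⊢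
  exact hp.symm

theorem swap_mem_coneC {p : ℤ × ℤ} (hp : p ∈ coneC) : p.swap ∈ coneC :=
  Or.symm hp

def reflX (p : ℤ × ℤ) : ℤ × ℤ := (-p.1 - 2, p.2)

theorem reflX_reflX (p : ℤ × ℤ) : reflX (reflX p) = p := by
  simp [reflX]

theorem reflX_of_fst_eq_neg_one {p : ℤ × ℤ} (hp : p.1 = -1) : reflX p = p :=
  Prod.ext (by simp only [reflX, hp]; norm_num) rfl

theorem fst_reflX_eq_neg_one_iff {p : ℤ × ℤ} : (reflX p).1 = -1 ↔ p.1 = -1 := by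
  simp only [reflX]
  omega

theorem reflX_sub_reflX_mem_diagSteps {p q : ℤ × ℤ} (h : p - q ∈ diagSteps) :
    reflX p - reflX q ∈ diagSteps := by
  simp only [mem_diagSteps, reflX, Prod.fst_sub, Prod.snd_sub] at h ⊢
  omega

theorem IsWalk.abs_fst_sub_le {R : Set (ℤ × ℤ)} {a b : ℤ × ℤ} {n : ℕ} {w : ℕ → ℤ × ℤ}
    (hw : IsWalk diagSteps R a b n w) : ∀ k < n, |(w (k + 1)).1 - (w k).1| ≤ 1 := by
  intro k hk
  have := (mem_diagSteps.mp (hw.step k hk)).1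
  rw [Prod.fst_sub] at this
  rw [abs_le]
  omega

theorem finite_diagSteps : diagSteps.Finite := by
  rw [diagSteps]
  exact Set.toFinite _

def HitsLineX (n : ℕ) (w : ℕ → ℤ × ℤ) : Prop := ∃ k ≤ n, (w k).1 = -1

/-- `0` if the walk never visits the line `x = -1` before time `n`. -/
noncomputable def lastHitX (n : ℕ) (w : ℕ → ℤ × ℤ) : ℕ :=
  Nat.findGreatest (fun k => (w k).1 = -1) n

/-- After its last visit to the line `x = -1` the walk stays in `y ≥ 0`: exactly what keeps it
in `coneC` when that final stretch is reflected in the line. -/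
def IsReflectable (n : ℕ) (w : ℕ → ℤ × ℤ) : Prop :=
  HitsLineX n w ∧ ∀ m, lastHitX n w < m → m ≤ n → 0 ≤ (w m).2

noncomputable def reflectTail (n : ℕ) (w : ℕ → ℤ × ℤ) : ℕ → ℤ × ℤ :=
  fun k => if k ≤ lastHitX n w then w k else reflX (w k)

section Reflection

variable {R : Set (ℤ × ℤ)} {a b : ℤ × ℤ} {n m : ℕ} {w : ℕ → ℤ × ℤ}

theorem fst_lastHitX (h : HitsLineX n w) : (w (lastHitX n w)).1 = -1 :=
  have ⟨_, hk, hk'⟩ := h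
  Nat.findGreatest_spec (P := fun k => (w k).1 = -1) hk hk'

theorem lastHitX_le : lastHitX n w ≤ n := Nat.findGreatest_le n

theorem fst_ne_neg_one_of_lastHitX_lt (hm : lastHitX n w < m) (hmn : m ≤ n) :
    (w m).1 ≠ -1 :=
  Nat.findGreatest_is_greatest hm hmn

theorem IsWalk.fst_lt_iff_of_lastHitX_lt (hw : IsWalk diagSteps R a b n w)
    (hm : lastHitX n w < m) (hmn : m ≤ n) : (w m).1 < -1 ↔ b.1 < -1 := by
  rw [← hw.finish n le_rfl]
  exact lt_iff_lt_of_findGreatest_lt hw.abs_fst_sub_le hm hmn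

theorem IsWalk.fst_nonneg_of_lastHitX_lt (hw : IsWalk diagSteps R a b n w) (hb : 0 ≤ b.1)
    (hm : lastHitX n w < m) (hmn : m ≤ n) : 0 ≤ (w m).1 := by
  have := hw.fst_lt_iff_of_lastHitX_lt hm hmn
  have := fst_ne_neg_one_of_lastHitX_lt hm hmn
  omega

theorem IsWalk.fst_lt_iff_of_not_hitsLineX (hw : IsWalk diagSteps R a b n w)
    (h : ¬HitsLineX n w) (hm : m ≤ n) : (w m).1 < -1 ↔ a.1 < -1 := by
  rw [← hw.start]
  exact (lt_iff_lt_of_forall_ne (fun k _ hk => hw.abs_fst_sub_le k (by omega)) m.zero_le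
    fun k _ hk hk' => h ⟨k, hk.trans hm, hk'⟩).symm

theorem IsWalk.hitsLineX (hw : IsWalk diagSteps R a b n w) (h : ¬(a.1 < -1 ↔ b.1 < -1)) :
    HitsLineX n w :=
  exists_eq_of_not_lt_iff_lt hw.abs_fst_sub_le (by rwa [hw.start, hw.finish n le_rfl])

theorem fst_reflectTail_eq_neg_one_iff {k : ℕ} :
    (reflectTail n w k).1 = -1 ↔ (w k).1 = -1 := by
  unfold reflectTail
  split_ifs
  · rfl
  · exact fst_reflX_eq_neg_one_iff

theorem snd_reflectTail (k : ℕ) : (reflectTail n w k).2 = (w k).2 := by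
  unfold reflectTail
  split_ifs <;> rfl

theorem lastHitX_reflectTail : lastHitX n (reflectTail n w) = lastHitX n w := by
  simp only [lastHitX, fst_reflectTail_eq_neg_one_iff]

theorem reflectTail_involutive : Function.Involutive (reflectTail n) := by
  intro w
  ext k : 1
  have h := lastHitX_reflectTail (n := n) (w := w)
  simp only [reflectTail] at h ⊢
  rw [h]
  split_ifs <;> simp [reflX_reflX]

theorem isReflectable_reflectTail :
    IsReflectable n (reflectTail n w) ↔ IsReflectable n w := by
  simp only [IsReflectable, HitsLineX, lastHitX_reflectTail, fst_reflectTail_eq_neg_one_iff,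
    snd_reflectTail]

theorem IsWalk.reflectTail (hw : IsWalk diagSteps coneC a b n w) (hT : IsReflectable n w)
    (hb : b.1 ≠ -1) : IsWalk diagSteps coneC a (reflX b) n (reflectTail n w) := by
  have hlast := fst_lastHitX hT.1
  have hlt : lastHitX n w < n := lastHitX_le.lt_of_ne fun h => hb (by
    rwa [h, hw.finish n le_rfl] at hlast)
  refine hw.splice reflX (fun _ _ => reflX_sub_reflX_mem_diagSteps) hlt ?_
    fun k hk hkn => Or.inr (hT.2 k hk hkn)
  exact reflX_of_fst_eq_neg_one hlast

theorem card_isReflectable_eq_card_reflX (hb : b.1 ≠ -1) :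
    Nat.card {w // IsWalk diagSteps coneC a b n w ∧ IsReflectable n w} =
      Nat.card {w // IsWalk diagSteps coneC a (reflX b) n w ∧ IsReflectable n w} := by
  refine Nat.card_congr (Equiv.subtypeEquiv
    (Function.Involutive.toPerm (reflectTail n) reflectTail_involutive) fun w => ?_)
  simp only [Function.Involutive.coe_toPerm, isReflectable_reflectTail]
  refine ⟨fun ⟨hw, hT⟩ => ⟨hw.reflectTail hT hb, hT⟩, fun ⟨hw, hT⟩ => ⟨?_, hT⟩⟩
  have hb' : (reflX b).1 ≠ -1 := fun h => hb (fst_reflX_eq_neg_one_iff.mp h)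
  simpa [reflectTail_involutive w, reflX_reflX] using
    hw.reflectTail (isReflectable_reflectTail.mpr hT) hb'

theorem IsWalk.isReflectable_iff (hw : IsWalk diagSteps coneC a b n w) (hb : b.1 < -1) :
    IsReflectable n w ↔ HitsLineX n w := by
  refine ⟨And.left, fun h => ⟨h, fun m hm hmn => ?_⟩⟩
  have := (hw.fst_lt_iff_of_lastHitX_lt hm hmn).mpr hb
  exact (hw.mem m hmn).resolve_left (by omega)

theorem card_isReflectable_eq_card_hitsLineX (hb : 0 ≤ b.1) :
    Nat.card {w // IsWalk diagSteps coneC a b n w ∧ IsReflectable n w} =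
      Nat.card {w // IsWalk diagSteps coneC a (reflX b) n w ∧ HitsLineX n w} :=
  (card_isReflectable_eq_card_reflX (by omega)).trans <| Nat.card_congr <|
    Equiv.subtypeEquivRight fun _ => and_congr_right fun hw =>
      hw.isReflectable_iff (by simp only [reflX]; omega)

theorem IsWalk.isReflectable_of_fst_lt (hw : IsWalk diagSteps coneC a b n w)
    (ha : -1 ≤ a.1) (hb : b.1 < -1) : IsReflectable n w :=
  (hw.isReflectable_iff hb).mpr (hw.hitsLineX (by omega))

end Reflection

section Symmetries

variable {a b : ℤ × ℤ} {n : ℕ} {w : ℕ → ℤ × ℤ}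

theorem card_not_hitsLineX_eq_card_quadQ (ha : 0 ≤ a.1) :
    Nat.card {w // IsWalk diagSteps coneC (reflX a) (reflX b) n w ∧ ¬HitsLineX n w} =
      Nat.card {w // IsWalk diagSteps quadQ a b n w} := by
  have hinv : Function.Involutive (reflX ∘ · : (ℕ → ℤ × ℤ) → ℕ → ℤ × ℤ) := fun w => by
    ext k : 1
    simp [reflX_reflX]
  refine Nat.card_congr (Equiv.subtypeEquiv (hinv.toPerm _) fun w => ?_)
  simp only [Function.Involutive.coe_toPerm]
  refine ⟨fun ⟨hw, hx⟩ => ?_, fun hw => ⟨?_, ?_⟩⟩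
  · have hleft (k : ℕ) (hk : k ≤ n) : (w k).1 < -1 :=
      (hw.fst_lt_iff_of_not_hitsLineX hx hk).mpr (by simp only [reflX]; omega)
    simpa [reflX_reflX] using hw.map (R' := quadQ) reflX
      (fun _ _ => reflX_sub_reflX_mem_diagSteps) fun k hk =>
        ⟨by simp only [reflX]; linarith [hleft k hk],
          (hw.mem k hk).resolve_left (by linarith [hleft k hk])⟩
  · rw [← hinv w]
    exact hw.map reflX (fun _ _ => reflX_sub_reflX_mem_diagSteps) fun k hk =>
      Or.inr (hw.mem k hk).2
  · rintro ⟨k, hk, hk'⟩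
    have := (hw.mem k hk).1
    simp only [Function.comp_apply, reflX, hk'] at this
    omega

theorem card_isWalk_and_comp_swap {S R : Set (ℤ × ℤ)} (hS : ∀ p ∈ S, p.swap ∈ S)
    (hR : ∀ p ∈ R, p.swap ∈ R) (P : (ℕ → ℤ × ℤ) → Prop) :
    Nat.card {w // IsWalk S R a b n w ∧ P (Prod.swap ∘ w)} =
      Nat.card {w // IsWalk S R a.swap b.swap n w ∧ P w} := by
  have hinv : Function.Involutive (Prod.swap ∘ · : (ℕ → ℤ × ℤ) → ℕ → ℤ × ℤ) := fun w => by
    ext k : 1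
    simp
  refine Nat.card_congr (Equiv.subtypeEquiv (hinv.toPerm _) fun w => ?_)
  simp only [Function.Involutive.coe_toPerm]
  refine ⟨fun ⟨hw, hP⟩ => ⟨hw.swap hS hR, hP⟩, fun ⟨hw, hP⟩ => ⟨?_, hP⟩⟩
  simpa [← Function.comp_assoc, Prod.swap_swap_eq] using hw.swap hS hR

theorem IsWalk.isReflectable_comp_swap_iff (hw : IsWalk diagSteps coneC a b n w)
    (ha₁ : a.1 < -1) (ha₂ : 0 ≤ a.2) (hb₁ : 0 ≤ b.1) (hb₂ : 0 ≤ b.2) :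
    IsReflectable n (Prod.swap ∘ w) ↔ ¬IsReflectable n w := by
  have hv := hw.swap (fun _ => swap_mem_diagSteps) fun _ => swap_mem_coneC
  have hx : HitsLineX n w := hw.hitsLineX (by omega)
  have hxs : (w (lastHitX n w)).1 = -1 := fst_lastHitX hx
  by_cases hy : HitsLineX n (Prod.swap ∘ w)
  · have hyt : (w (lastHitX n (Prod.swap ∘ w))).2 = -1 := fst_lastHitX hy
    have hTw : IsReflectable n w ↔ lastHitX n (Prod.swap ∘ w) ≤ lastHitX n w := by
      refine ⟨fun h => not_lt.mp fun hlt => ?_, fun hle => ⟨hx, fun m hm hmn => ?_⟩⟩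
      · have := h.2 _ hlt lastHitX_le
        omega
      · exact hv.fst_nonneg_of_lastHitX_lt hb₂ (hle.trans_lt hm) hmn
    have hTv :
        IsReflectable n (Prod.swap ∘ w) ↔ lastHitX n w < lastHitX n (Prod.swap ∘ w) := by
      refine ⟨fun h => lt_of_not_ge fun hle => ?_, fun hlt => ⟨hy, fun m hm hmn => ?_⟩⟩
      · rcases hle.lt_or_eq with hlt | heq
        · have := h.2 _ hlt lastHitX_le
          simp only [Function.comp_apply, Prod.snd_swap] at this
          omega
        · have := hw.mem _ (lastHitX_le (w := w))
          rw [heq] at hyt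
          rcases this with h | h <;> omega
      · exact hw.fst_nonneg_of_lastHitX_lt hb₁ (hlt.trans hm) hmn
    rw [hTw, hTv, not_le]
  · simp only [IsReflectable, hy, false_and, false_iff, not_not]
    refine ⟨hx, fun m _ hmn => ?_⟩
    have hside : (w m).2 < -1 ↔ a.2 < -1 := hv.fst_lt_iff_of_not_hitsLineX hy hmn
    have hne : (w m).2 ≠ -1 := fun h => hy ⟨m, hmn, h⟩
    omega

theorem card_not_isReflectable_eq_card_isWalk (ha₁ : a.1 < -1) (ha₂ : 0 ≤ a.2) (hb₁ : 0 ≤ b.1)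
    (hb₂ : 0 ≤ b.2) :
    Nat.card {w // IsWalk diagSteps coneC a b n w ∧ ¬IsReflectable n w} =
      Nat.card {w // IsWalk diagSteps coneC a (b.1, -b.2 - 2) n w} := calc
  _ = Nat.card {w // IsWalk diagSteps coneC a b n w ∧ IsReflectable n (Prod.swap ∘ w)} :=
    Nat.card_congr <| Equiv.subtypeEquivRight fun _ => and_congr_right fun hw =>
      (hw.isReflectable_comp_swap_iff ha₁ ha₂ hb₁ hb₂).symm
  _ = Nat.card {w // IsWalk diagSteps coneC a.swap b.swap n w ∧ IsReflectable n w} :=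
    card_isWalk_and_comp_swap (fun _ => swap_mem_diagSteps) (fun _ => swap_mem_coneC) _
  _ = Nat.card {w // IsWalk diagSteps coneC a.swap (reflX b.swap) n w ∧ IsReflectable n w} :=
    card_isReflectable_eq_card_reflX (by simp; omega)
  _ = Nat.card {w // IsWalk diagSteps coneC a (b.1, -b.2 - 2) n w ∧
        IsReflectable n (Prod.swap ∘ w)} :=
    (card_isWalk_and_comp_swap (a := a) (b := (b.1, -b.2 - 2)) (fun _ => swap_mem_diagSteps)
      (fun _ => swap_mem_coneC) _).symm
  _ = _ := Nat.card_congr <| Equiv.subtypeEquivRight fun _ => and_iff_left_of_imp fun hw =>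
    (hw.swap (fun _ => swap_mem_diagSteps) fun _ => swap_mem_coneC).isReflectable_of_fst_lt
      (by simp; omega) (by simp; omega)

end Symmetries

theorem diag_threeQuadrant_shifted_reflection_identity
    (i j : ℤ) (hi : 0 ≤ i) (hj : 0 ≤ j) (n : ℕ) :
    walkCount diagSteps coneC (-2, 0) (i, j) n +
        walkCount diagSteps quadQ (0, 0) (i, j) n =
      walkCount diagSteps coneC (-2, 0) (-i - 2, j) n +
        walkCount diagSteps coneC (-2, 0) (i, -j - 2) n := by
  simp only [walkCount_eq_card_isWalk]
  have := IsWalk.finite (R := coneC) (a := (-2, 0)) (b := (i, j)) (n := n) finite_diagSteps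
  have := IsWalk.finite (R := coneC) (a := (-2, 0)) (b := (-i - 2, j)) (n := n) finite_diagSteps
  have hsplit := Nat.card_subtype_eq_card_and_add_card_and_not
    (p := IsWalk diagSteps coneC (-2, 0) (i, j) n) (q := IsReflectable n)
  have hsplit' := Nat.card_subtype_eq_card_and_add_card_and_not
    (p := IsWalk diagSteps coneC (-2, 0) (-i - 2, j) n) (q := HitsLineX n)
  have hrefl := card_isReflectable_eq_card_hitsLineX (a := (-2, 0)) (b := (i, j)) (n := n) hi
  have hquad := card_not_hitsLineX_eq_card_quadQ (a := (0, 0)) (b := (i, j)) (n := n) le_rfl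
  have hswap := card_not_isReflectable_eq_card_isWalk (a := (-2, 0)) (b := (i, j)) (n := n)
    (by norm_num) le_rfl hi hj
  simp only [reflX] at hrefl hquad hswap
  norm_num at hquad
  omega
end
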